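/- arXiv:2404.19034 — 8 statements merged into one kernel-verified Lean document; each statement's English description precedes it below -/
import Mathlib

section
/- For every ξ > 0, the integral ∫₀^ξ 2 sinh(ξ−z) sinh(z) / (ξ² − z²) dz is at most log(64/27)·sinh(ξ); consequently sinh(ξ) − ∫₀^ξ 2 sinh(ξ−z) sinh(z)/(ξ²−z²) dz ≥ (1 − log(64/27))·sinh(ξ) > 0. -/
/-!
Since `sinh ξ = sinh (ξ - z) cosh z + cosh (ξ - z) sinh z` and `tanh z ≤ z`, one has
`sinh (ξ - z) sinh z ≤ min z (ξ - z) · sinh ξ` on `[0, ξ]`. Bounding the numerator by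
`2 z sinh ξ` on `[0, ξ/2]` and by `2 (ξ - z) sinh ξ` on `[ξ/2, ξ]` leaves the elementary integrals
`∫₀^{ξ/2} 2z/(ξ² - z²) = log (4/3)` and `∫_{ξ/2}^ξ 2/(ξ + z) = 2 log (4/3)`, whose sum is
`log (64/27) = 3 log (4/3) < 3 (4/3 - 1) = 1`.
-/

open Real intervalIntegral MeasureTheory

theorem Real.sinh_le_mul_cosh {x : ℝ} (hx : 0 ≤ x) : sinh x ≤ x * cosh x := by
  have hmono : MonotoneOn (fun t => t * cosh t - sinh t) (Set.Ici 0) := by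
    refine monotoneOn_of_hasDerivWithinAt_nonneg (f' := fun t => t * sinh t) (convex_Ici 0)
      (by fun_prop) (fun t _ => ?_) (fun t ht => ?_)
    · exact (((hasDerivAt_id t).mul (hasDerivAt_cosh t)).sub (hasDerivAt_sinh t)
        |>.congr_deriv (by simp)).hasDerivWithinAt
    · rw [interior_Ici, Set.mem_Ioi] at ht
      exact mul_nonneg ht.le (sinh_nonneg_iff.2 ht.le)
  simpa using hmono Set.self_mem_Ici hx hx

theorem Real.sinh_sub_mul_sinh_le {ξ z : ℝ} (hz : 0 ≤ z) (hzξ : z ≤ ξ) :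
    sinh (ξ - z) * sinh z ≤ z * sinh ξ := by
  have hξz : 0 ≤ sinh (ξ - z) := sinh_nonneg_iff.2 (sub_nonneg.2 hzξ)
  calc sinh (ξ - z) * sinh z ≤ sinh (ξ - z) * (z * cosh z) :=
        mul_le_mul_of_nonneg_left (sinh_le_mul_cosh hz) hξz
    _ = z * (sinh (ξ - z) * cosh z) := by ring
    _ ≤ z * (sinh (ξ - z) * cosh z + cosh (ξ - z) * sinh z) := by
        gcongr
        exact le_add_of_nonneg_right
          (mul_nonneg (cosh_pos _).le (sinh_nonneg_iff.2 hz))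
    _ = z * sinh ξ := by rw [← sinh_add, sub_add_cancel]

/-- At `z = ξ` the value is the junk `0 / 0 = 0`, not the limit `sinh ξ / ξ`, so the kernel is
not continuous on `[0, ξ]`; integrability comes from domination instead. -/
noncomputable def sinhKernel (ξ z : ℝ) : ℝ := 2 * sinh (ξ - z) * sinh z / (ξ ^ 2 - z ^ 2)

section sinhKernel

variable {ξ z : ℝ}

theorem sinhKernel_nonneg (hz : 0 ≤ z) (hzξ : z ≤ ξ) : 0 ≤ sinhKernel ξ z := by
  have : 0 ≤ sinh (ξ - z) := sinh_nonneg_iff.2 (sub_nonneg.2 hzξ)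
  have : 0 ≤ sinh z := sinh_nonneg_iff.2 hz
  unfold sinhKernel
  exact div_nonneg (by positivity) (by nlinarith)

theorem sinhKernel_le_left (hz : 0 ≤ z) (hzξ : z ≤ ξ) :
    sinhKernel ξ z ≤ sinh ξ * (2 * z / (ξ ^ 2 - z ^ 2)) := by
  rw [mul_div_assoc', sinhKernel, mul_assoc]
  refine div_le_div_of_nonneg_right ?_ (by nlinarith)
  linarith [sinh_sub_mul_sinh_le hz hzξ]

theorem sinhKernel_le_right (hz : 0 ≤ z) (hzξ : z ≤ ξ) :
    sinhKernel ξ z ≤ sinh ξ * (2 / (ξ + z)) := by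
  have hξ : 0 ≤ sinh ξ := sinh_nonneg_iff.2 (hz.trans hzξ)
  obtain rfl | hlt := hzξ.eq_or_lt
  · simp only [sinhKernel, sub_self, sinh_zero, mul_zero, zero_mul, zero_div]
    positivity
  have hkey := sinh_sub_mul_sinh_le (sub_nonneg.2 hzξ) (sub_le_self ξ hz)
  rw [sub_sub_cancel] at hkey
  calc sinhKernel ξ z ≤ 2 * ((ξ - z) * sinh ξ) / ((ξ - z) * (ξ + z)) := by
        rw [sinhKernel, mul_assoc, show ξ ^ 2 - z ^ 2 = (ξ - z) * (ξ + z) by ring]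
        refine div_le_div_of_nonneg_right ?_ (by nlinarith)
        linarith
    _ = sinh ξ * (2 / (ξ + z)) := by
        field_simp [(sub_pos.2 hlt).ne']

theorem measurable_sinhKernel : Measurable (sinhKernel ξ) := by
  unfold sinhKernel; fun_prop

theorem intervalIntegrable_sinhKernel (hξ : 0 < ξ) :
    IntervalIntegrable (sinhKernel ξ) volume 0 ξ := by
  have hg : IntervalIntegrable (fun z => sinh ξ * (2 / (ξ + z))) volume 0 ξ := by
    refine ContinuousOn.intervalIntegrable ?_
    refine continuousOn_const.mul (continuousOn_const.div (by fun_prop) fun z hz => ?_)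
    rw [Set.uIcc_of_le hξ.le] at hz
    linarith [hz.1]
  refine hg.mono_fun' measurable_sinhKernel.aestronglyMeasurable ?_
  rw [Set.uIoc_of_le hξ.le]
  filter_upwards [ae_restrict_mem measurableSet_Ioc] with z hz
  rw [Real.norm_eq_abs, abs_of_nonneg (sinhKernel_nonneg hz.1.le hz.2)]
  exact sinhKernel_le_right hz.1.le hz.2

end sinhKernel

theorem integral_two_mul_div_sq_sub_sq {a b ξ : ℝ} (h : ∀ z ∈ Set.uIcc a b, z ^ 2 < ξ ^ 2) :
    ∫ z in a..b, 2 * z / (ξ ^ 2 - z ^ 2) = log (ξ ^ 2 - a ^ 2) - log (ξ ^ 2 - b ^ 2) := by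
  have hne : ∀ z ∈ Set.uIcc a b, ξ ^ 2 - z ^ 2 ≠ 0 := fun z hz => (sub_pos.2 (h z hz)).ne'
  have hderiv : ∀ z ∈ Set.uIcc a b,
      HasDerivAt (fun z => -log (ξ ^ 2 - z ^ 2)) (2 * z / (ξ ^ 2 - z ^ 2)) z := fun z hz =>
    ((hasDerivAt_pow 2 z).const_sub (ξ ^ 2) |>.log (hne z hz)).neg.congr_deriv (by ring)
  rw [integral_eq_sub_of_hasDerivAt hderiv
    ((continuousOn_const.mul continuousOn_id).div (by fun_prop) hne).intervalIntegrable]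
  ring

theorem integral_two_div_add {a b ξ : ℝ} (ha : 0 < ξ + a) (hb : 0 < ξ + b) :
    ∫ z in a..b, 2 / (ξ + z) = 2 * log ((ξ + b) / (ξ + a)) := by
  simp_rw [div_eq_mul_inv (2 : ℝ)]
  rw [intervalIntegral.integral_const_mul, integral_comp_add_left (fun x => x⁻¹),
    integral_inv_of_pos ha hb]

theorem log_sixtyFour_div_twentySeven : log (64 / 27) = 3 * log (4 / 3) := by
  rw [show (64 / 27 : ℝ) = (4 / 3) ^ 3 by norm_num, log_pow]; norm_num

theorem log_sixtyFour_div_twentySeven_lt_one : log (64 / 27) < 1 := by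
  rw [log_sixtyFour_div_twentySeven]
  linarith [log_lt_sub_one_of_pos (by norm_num : (0 : ℝ) < 4 / 3) (by norm_num)]

theorem integral_sinhKernel_le {ξ : ℝ} (hξ : 0 < ξ) :
    ∫ z in (0 : ℝ)..ξ, sinhKernel ξ z ≤ log (64 / 27) * sinh ξ := by
  have hint := intervalIntegrable_sinhKernel hξ
  have hmid : ξ / 2 ∈ Set.uIcc 0 ξ := by
    rw [Set.uIcc_of_le hξ.le]; constructor <;> linarith
  have hsq : ∀ z ∈ Set.uIcc 0 (ξ / 2), z ^ 2 < ξ ^ 2 := by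
    intro z hz
    rw [Set.uIcc_of_le (by linarith)] at hz
    nlinarith [hz.1, hz.2]
  have hleft : IntervalIntegrable (fun z => sinh ξ * (2 * z / (ξ ^ 2 - z ^ 2))) volume 0 (ξ / 2) :=
    (continuousOn_const.mul ((continuousOn_const.mul continuousOn_id).div (by fun_prop)
      fun z hz => (sub_pos.2 (hsq z hz)).ne')).intervalIntegrable
  have hright : IntervalIntegrable (fun z => sinh ξ * (2 / (ξ + z))) volume (ξ / 2) ξ :=
    (continuousOn_const.mul (continuousOn_const.div (by fun_prop) fun z hz => by
      rw [Set.uIcc_of_le (by linarith)] at hz; linarith [hz.1])).intervalIntegrable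
  calc ∫ z in (0 : ℝ)..ξ, sinhKernel ξ z
      = (∫ z in (0 : ℝ)..ξ / 2, sinhKernel ξ z) + ∫ z in ξ / 2..ξ, sinhKernel ξ z :=
        (integral_add_adjacent_intervals (hint.mono_set (Set.uIcc_subset_uIcc_left hmid))
          (hint.mono_set (Set.uIcc_subset_uIcc_right hmid))).symm
    _ ≤ (∫ z in (0 : ℝ)..ξ / 2, sinh ξ * (2 * z / (ξ ^ 2 - z ^ 2)))
          + ∫ z in ξ / 2..ξ, sinh ξ * (2 / (ξ + z)) := by
        gcongr
        · exact integral_mono_on (by linarith) (hint.mono_set (Set.uIcc_subset_uIcc_left hmid))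
            hleft fun z hz => sinhKernel_le_left hz.1 (by linarith [hz.2])
        · exact integral_mono_on (by linarith) (hint.mono_set (Set.uIcc_subset_uIcc_right hmid))
            hright fun z hz => sinhKernel_le_right (by linarith [hz.1]) hz.2
    _ = sinh ξ * (log (ξ ^ 2 - 0 ^ 2) - log (ξ ^ 2 - (ξ / 2) ^ 2))
          + sinh ξ * (2 * log ((ξ + ξ) / (ξ + ξ / 2))) := by
        rw [intervalIntegral.integral_const_mul, intervalIntegral.integral_const_mul,
          integral_two_mul_div_sq_sub_sq hsq, integral_two_div_add (by linarith) (by linarith)]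
    _ = log (64 / 27) * sinh ξ := by
        have hl : ξ ^ 2 - 0 ^ 2 ≠ 0 := (sub_pos.2 (hsq _ Set.left_mem_uIcc)).ne'
        have hr : ξ ^ 2 - (ξ / 2) ^ 2 ≠ 0 := (sub_pos.2 (hsq _ Set.right_mem_uIcc)).ne'
        rw [← log_div hl hr, log_sixtyFour_div_twentySeven]
        have h1 : (ξ ^ 2 - 0 ^ 2) / (ξ ^ 2 - (ξ / 2) ^ 2) = 4 / 3 := by field_simp; ring
        have h2 : (ξ + ξ) / (ξ + ξ / 2) = 4 / 3 := by field_simp; ring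
        rw [h1, h2]
        ring

/-- For every `ξ > 0`, `∫₀^ξ 2 sinh(ξ−z) sinh(z)/(ξ²−z²) dz ≤ log(64/27)·sinh ξ`;
consequently `sinh ξ − ∫₀^ξ 2 sinh(ξ−z) sinh(z)/(ξ²−z²) dz ≥ (1 − log(64/27))·sinh ξ > 0`. -/
theorem statement3 (ξ : ℝ) (hξ : 0 < ξ) :
    (∫ z in (0:ℝ)..ξ, 2 * Real.sinh (ξ - z) * Real.sinh z / (ξ ^ 2 - z ^ 2))
        ≤ Real.log (64 / 27) * Real.sinh ξ ∧
    (1 - Real.log (64 / 27)) * Real.sinh ξ ≤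
        Real.sinh ξ - ∫ z in (0:ℝ)..ξ, 2 * Real.sinh (ξ - z) * Real.sinh z / (ξ ^ 2 - z ^ 2) ∧
    0 < (1 - Real.log (64 / 27)) * Real.sinh ξ := by
  have hbound : ∫ z in (0 : ℝ)..ξ, sinhKernel ξ z ≤ log (64 / 27) * sinh ξ :=
    integral_sinhKernel_le hξ
  have hlog := log_sixtyFour_div_twentySeven_lt_one
  exact ⟨hbound, by unfold sinhKernel at hbound; linarith,
    mul_pos (by linarith) (sinh_pos_iff.2 hξ)⟩
end

section
/- Let μ > 0, p > 0 and 0 < x* < μ. Let f : [x*,μ] → ℝ be continuous, twice continuously differentiable on [x*,μ), and satisfy f''(x) = ( 2/(x²−μ²) + p² ) f(x) for all x ∈ [x*,μ), with f(x*) = 0 and f'(x*) > 0. Then f(x) > 0 for all x* < x ≤ μ. (Likewise, if f'(x*) < 0 then f(x) < 0 for all x* < x ≤ μ.) -/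
/-!
`φ(x) = μ² - x²` solves the equation with `p = 0`, so the Wronskian `W = φ f' - φ' f` satisfies
`W' = p² φ f`. While `f ≥ 0`, `W` therefore stays above `W(x*) = φ(x*) f'(x*) > 0`, and
`(f / φ)' = W / φ² > 0` keeps `f / φ`, hence `f`, positive: `f` has no first zero in `(x*, μ)`.
At `μ`, where `φ` vanishes, `f' φ = W - 2x f ≥ W(x*) / 2` as long as `f` is small, so `f`
increases near `μ` and `f(μ) > 0`. The case `f'(x*) < 0` is the same statement for `-f`.
-/

open Set Filter Topology

theorem ContDiffOn.hasDerivWithinAt_derivWithin {𝕜 F : Type*} [NontriviallyNormedField 𝕜]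
    [NormedAddCommGroup F] [NormedSpace 𝕜 F] {f : 𝕜 → F} {s : Set 𝕜} {x : 𝕜}
    (hf : ContDiffOn 𝕜 2 f s) (hs : UniqueDiffOn 𝕜 s) (hx : x ∈ s) :
    HasDerivWithinAt (derivWithin f s) (iteratedDerivWithin 2 f s x) s x := by
  rw [iteratedDerivWithin_succ', iteratedDerivWithin_one]
  exact ((hf.derivWithin hs (m := 1) le_rfl).differentiableOn one_ne_zero x hx).hasDerivWithinAt

theorem eventually_pos_nhdsGT_of_hasDerivWithinAt {f : ℝ → ℝ} {a f' : ℝ}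
    (hf : HasDerivWithinAt f f' (Ici a) a) (hf' : 0 < f') (ha : f a = 0) :
    ∀ᶠ x in 𝓝[>] a, 0 < f x := by
  have hslope := hasDerivWithinAt_iff_tendsto_slope.mp hf
  rw [Ici_sdiff_left] at hslope
  filter_upwards [hslope.eventually (eventually_gt_nhds hf'), self_mem_nhdsWithin] with x hx hax
  exact pos_of_slope_pos hax hx ha

theorem forall_Ioc_pos_of_forall_Ioo_pos {g : ℝ → ℝ} {a c : ℝ}
    (hg : ContinuousOn g (Ioc a c)) (ha : ∀ᶠ y in 𝓝[>] a, 0 < g y)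
    (hstep : ∀ x ∈ Ioc a c, (∀ y ∈ Ioo a x, 0 < g y) → 0 < g x) :
    ∀ x ∈ Ioc a c, 0 < g x := by
  intro x hx
  by_contra! hgx
  obtain ⟨e, hae, he⟩ := (nhdsGT_basis a).eventually_iff.mp ha
  set d := min e x
  have hda : a < d := lt_min hae hx.1
  set Z := Icc d x ∩ g ⁻¹' Iic 0
  have hZ : IsClosed Z :=
    (hg.mono (Icc_subset_Ioc hda hx.2)).preimage_isClosed_of_isClosed
      isClosed_Icc isClosed_Iic
  have hbdd : BddBelow Z := ⟨d, fun z hz => hz.1.1⟩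
  have hmem : sInf Z ∈ Z := hZ.csInf_mem ⟨x, ⟨min_le_right _ _, le_rfl⟩, hgx⟩ hbdd
  refine not_lt.mpr hmem.2 (hstep _ ⟨hda.trans_le hmem.1.1, hmem.1.2.trans hx.2⟩ fun y hy => ?_)
  rcases lt_or_ge y d with hyd | hdy
  · exact he ⟨hy.1, hyd.trans_le (min_le_left _ _)⟩
  · by_contra! hgy
    exact notMem_of_lt_csInf hy.2 hbdd ⟨⟨hdy, hy.2.le.trans hmem.1.2⟩, hgy⟩

section Interval

variable {g g' : ℝ → ℝ} {s : Set ℝ} {c d : ℝ}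

theorem monotoneOn_Icc_of_hasDerivWithinAt_nonneg (hsub : Icc c d ⊆ s)
    (hg : ∀ x ∈ s, HasDerivWithinAt g (g' x) s x) (hg' : ∀ x ∈ Ioo c d, 0 ≤ g' x) :
    MonotoneOn g (Icc c d) :=
  monotoneOn_of_hasDerivWithinAt_nonneg (convex_Icc c d)
    (fun x hx => (hg x (hsub hx)).continuousWithinAt.mono hsub)
    (fun x hx => by
      rw [interior_Icc] at hx ⊢
      exact (hg x (hsub (Ioo_subset_Icc_self hx))).mono (Ioo_subset_Icc_self.trans hsub))
    (fun x hx => hg' x (by rwa [interior_Icc] at hx))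

theorem strictMonoOn_Icc_of_hasDerivWithinAt_pos (hsub : Icc c d ⊆ s)
    (hg : ∀ x ∈ s, HasDerivWithinAt g (g' x) s x) (hg' : ∀ x ∈ Ioo c d, 0 < g' x) :
    StrictMonoOn g (Icc c d) :=
  strictMonoOn_of_hasDerivWithinAt_pos (convex_Icc c d)
    (fun x hx => (hg x (hsub hx)).continuousWithinAt.mono hsub)
    (fun x hx => by
      rw [interior_Icc] at hx ⊢
      exact (hg x (hsub (Ioo_subset_Icc_self hx))).mono (Ioo_subset_Icc_self.trans hsub))
    (fun x hx => hg' x (by rwa [interior_Icc] at hx))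

end Interval

def wronskian (φ φ' f f' : ℝ → ℝ) (x : ℝ) : ℝ := φ x * f' x - φ' x * f x

section Sturm

variable {φ φ' f f' : ℝ → ℝ}

theorem wronskian_pos_of_eq_zero {a : ℝ} (hφa : 0 < φ a) (hfa : f a = 0) (hf'a : 0 < f' a) :
    0 < wronskian φ φ' f f' a := by
  simpa [wronskian, hfa] using mul_pos hφa hf'a

theorem hasDerivWithinAt_wronskian {s : Set ℝ} {x q r : ℝ}
    (hφ : HasDerivWithinAt φ (φ' x) s x) (hφ' : HasDerivWithinAt φ' (q * φ x) s x)
    (hf : HasDerivWithinAt f (f' x) s x) (hf' : HasDerivWithinAt f' ((q + r) * f x) s x) :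
    HasDerivWithinAt (wronskian φ φ' f f') (r * φ x * f x) s x :=
  ((hφ.mul hf').sub (hφ'.mul hf)).congr_deriv (by ring)

variable {q r : ℝ → ℝ} {a b : ℝ}

theorem wronskian_le_wronskian
    (hφ : ∀ x ∈ Ico a b, HasDerivWithinAt φ (φ' x) (Ico a b) x)
    (hφ' : ∀ x ∈ Ico a b, HasDerivWithinAt φ' (q x * φ x) (Ico a b) x)
    (hf : ∀ x ∈ Ico a b, HasDerivWithinAt f (f' x) (Ico a b) x)
    (hf' : ∀ x ∈ Ico a b, HasDerivWithinAt f' ((q x + r x) * f x) (Ico a b) x)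
    (hφ_nonneg : ∀ x ∈ Ioo a b, 0 ≤ φ x) (hr : ∀ x ∈ Ioo a b, 0 ≤ r x)
    {c : ℝ} (hc : c ∈ Ico a b) (hf_nonneg : ∀ x ∈ Ioo a c, 0 ≤ f x) :
    wronskian φ φ' f f' a ≤ wronskian φ φ' f f' c := by
  refine monotoneOn_Icc_of_hasDerivWithinAt_nonneg (Icc_subset_Ico_right hc.2)
    (fun x hx => hasDerivWithinAt_wronskian (hφ x hx) (hφ' x hx) (hf x hx) (hf' x hx))
    (fun x hx => ?_) ⟨le_rfl, hc.1⟩ ⟨hc.1, le_rfl⟩ hc.1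
  have hxb : x ∈ Ioo a b := ⟨hx.1, hx.2.trans hc.2⟩
  exact mul_nonneg (mul_nonneg (hr x hxb) (hφ_nonneg x hxb)) (hf_nonneg x hx)

theorem pos_of_wronskian_pos
    (hφ : ∀ x ∈ Ico a b, HasDerivWithinAt φ (φ' x) (Ico a b) x)
    (hf : ∀ x ∈ Ico a b, HasDerivWithinAt f (f' x) (Ico a b) x)
    (hφpos : ∀ x ∈ Ico a b, 0 < φ x) {c : ℝ} (hc : c ∈ Ioo a b)
    (hW : ∀ x ∈ Ioo a c, 0 < wronskian φ φ' f f' x) (hfa : f a = 0) : 0 < f c := by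
  have hquot : ∀ x ∈ Ico a b,
      HasDerivWithinAt (fun y => f y / φ y) (wronskian φ φ' f f' x / φ x ^ 2) (Ico a b) x :=
    fun x hx => ((hf x hx).fun_div (hφ x hx) (hφpos x hx).ne').congr_deriv
      (by rw [wronskian]; ring)
  have hmono := strictMonoOn_Icc_of_hasDerivWithinAt_pos (Icc_subset_Ico_right hc.2) hquot
    fun x hx => div_pos (hW x hx) (pow_pos (hφpos x ⟨hx.1.le, hx.2.trans hc.2⟩) 2)
  have : f a / φ a < f c / φ c := hmono ⟨le_rfl, hc.1.le⟩ ⟨hc.1.le, le_rfl⟩ hc.1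
  rwa [hfa, zero_div, div_pos_iff_of_pos_right (hφpos c ⟨hc.1.le, hc.2⟩)] at this

theorem pos_of_sturm_comparison
    (hφ : ∀ x ∈ Ico a b, HasDerivWithinAt φ (φ' x) (Ico a b) x)
    (hφ' : ∀ x ∈ Ico a b, HasDerivWithinAt φ' (q x * φ x) (Ico a b) x)
    (hf : ∀ x ∈ Ico a b, HasDerivWithinAt f (f' x) (Ico a b) x)
    (hf' : ∀ x ∈ Ico a b, HasDerivWithinAt f' ((q x + r x) * f x) (Ico a b) x)
    (hφpos : ∀ x ∈ Ico a b, 0 < φ x) (hr : ∀ x ∈ Ioo a b, 0 ≤ r x)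
    (hfa : f a = 0) (hf'a : 0 < f' a) :
    ∀ x ∈ Ioo a b, 0 < f x := by
  intro x hx
  have hab : a < b := hx.1.trans hx.2
  have hWa := wronskian_pos_of_eq_zero (φ' := φ') (hφpos a ⟨le_rfl, hab⟩) hfa hf'a
  have hnear : ∀ᶠ y in 𝓝[>] a, 0 < f y :=
    eventually_pos_nhdsGT_of_hasDerivWithinAt
      ((hf a ⟨le_rfl, hab⟩).mono_of_mem_nhdsWithin (Ico_mem_nhdsGE hab)) hf'a hfa
  have hcont : ContinuousOn f (Ioc a x) := fun y hy =>
    ((hf y ⟨hy.1.le, hy.2.trans_lt hx.2⟩).continuousWithinAt).mono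
      fun z hz => ⟨hz.1.le, hz.2.trans_lt hx.2⟩
  refine forall_Ioc_pos_of_forall_Ioo_pos hcont hnear (fun c hc hpos => ?_) x ⟨hx.1, le_rfl⟩
  have hcb : c ∈ Ioo a b := ⟨hc.1, hc.2.trans_lt hx.2⟩
  refine pos_of_wronskian_pos hφ hf hφpos hcb (fun y hy => hWa.trans_le ?_) hfa
  exact wronskian_le_wronskian hφ hφ' hf hf' (fun z hz => (hφpos z ⟨hz.1.le, hz.2⟩).le) hr
    ⟨hy.1.le, hy.2.trans hcb.2⟩ fun z hz => (hpos z ⟨hz.1, hz.2.trans hy.2⟩).le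

end Sturm

theorem pos_right_endpoint_of_wronskian_ge {μ a w : ℝ} {f f' : ℝ → ℝ} (ha : 0 ≤ a)
    (haμ : a < μ) (hfc : ContinuousOn f (Icc a μ))
    (hf : ∀ x ∈ Ico a μ, HasDerivWithinAt f (f' x) (Ico a μ) x)
    (hf_nonneg : ∀ x ∈ Ioo a μ, 0 ≤ f x) (hw : 0 < w)
    (hW : ∀ x ∈ Ioo a μ, w ≤ wronskian (fun y => μ ^ 2 - y ^ 2) (fun y => -(2 * y)) f f' x) :
    0 < f μ := by
  by_contra! hfμ
  have hμ : 0 < μ := ha.trans_lt haμ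
  have hε : 0 < w / (4 * μ) := by positivity
  have hcont : Tendsto f (𝓝[<] μ) (𝓝 (f μ)) :=
    (hfc μ ⟨haμ.le, le_rfl⟩).mono_of_mem_nhdsWithin (Icc_mem_nhdsLT haμ)
  obtain ⟨l, hlμ, hl⟩ := (nhdsLT_basis μ).eventually_iff.mp
    ((hcont.eventually (eventually_lt_nhds (hfμ.trans_lt hε))).and (Ioo_mem_nhdsLT haμ))
  have hx₂ : (l + μ) / 2 ∈ Ioo l μ := ⟨by linarith, by linarith⟩
  have hax₂ : a < (l + μ) / 2 := (hl hx₂).2.1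
  have hmono : StrictMonoOn f (Icc ((l + μ) / 2) μ) := by
    refine strictMonoOn_of_hasDerivWithinAt_pos (f' := f') (convex_Icc _ _)
      (hfc.mono (Icc_subset_Icc hax₂.le le_rfl)) (fun x hx => ?_) (fun x hx => ?_)
    · rw [interior_Icc] at hx ⊢
      exact (hf x ⟨hax₂.le.trans hx.1.le, hx.2⟩).mono
        fun y hy => ⟨hax₂.le.trans hy.1.le, hy.2⟩
    · rw [interior_Icc] at hx
      obtain ⟨hfx, hax, -⟩ := hl ⟨hx₂.1.trans hx.1, hx.2⟩
      have hφx : 0 < μ ^ 2 - x ^ 2 := by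
        nlinarith [mul_pos (sub_pos.2 hx.2) (by linarith : 0 < μ + x)]
      have hxf : x * f x ≤ μ * (w / (4 * μ)) :=
        mul_le_mul hx.2.le hfx.le (hf_nonneg x ⟨hax, hx.2⟩) hμ.le
      have hμε : μ * (w / (4 * μ)) = w / 4 := by field_simp
      have hWx := hW x ⟨hax, hx.2⟩
      simp only [wronskian] at hWx
      exact pos_of_mul_pos_right (by nlinarith) hφx.le
  have := hmono ⟨le_rfl, hx₂.2.le⟩ ⟨hx₂.2.le, le_rfl⟩ hx₂.2
  linarith [hf_nonneg _ ⟨hax₂, hx₂.2⟩]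

theorem ode_solution_pos_of_deriv_pos {μ p a : ℝ} {f f' : ℝ → ℝ} (ha : 0 ≤ a) (haμ : a < μ)
    (hfc : ContinuousOn f (Icc a μ))
    (hf : ∀ x ∈ Ico a μ, HasDerivWithinAt f (f' x) (Ico a μ) x)
    (hf' : ∀ x ∈ Ico a μ, HasDerivWithinAt f' ((2 / (x ^ 2 - μ ^ 2) + p ^ 2) * f x) (Ico a μ) x)
    (hfa : f a = 0) (hf'a : 0 < f' a) :
    ∀ x ∈ Ioc a μ, 0 < f x := by
  have hφpos : ∀ x ∈ Ico a μ, 0 < μ ^ 2 - x ^ 2 := fun x hx => by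
    nlinarith [mul_pos (sub_pos.2 hx.2) (by linarith [hx.1] : 0 < μ + x)]
  have hφ : ∀ x ∈ Ico a μ,
      HasDerivWithinAt (fun y => μ ^ 2 - y ^ 2) (-(2 * x)) (Ico a μ) x := fun x _ =>
    ((hasDerivAt_pow 2 x).const_sub (μ ^ 2)).hasDerivWithinAt.congr_deriv (by ring)
  have hφ' : ∀ x ∈ Ico a μ, HasDerivWithinAt (fun y => -(2 * y))
      (2 / (x ^ 2 - μ ^ 2) * (μ ^ 2 - x ^ 2)) (Ico a μ) x := fun x hx => by
    have hne : x ^ 2 - μ ^ 2 ≠ 0 := by linarith [hφpos x hx]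
    refine (((hasDerivAt_id x).const_mul 2).neg).hasDerivWithinAt.congr_deriv ?_
    field_simp
    ring
  have hinner := pos_of_sturm_comparison (r := fun _ => p ^ 2) hφ hφ' hf hf' hφpos
    (fun _ _ => sq_nonneg p) hfa hf'a
  have hWa := wronskian_pos_of_eq_zero (φ := fun y => μ ^ 2 - y ^ 2) (φ' := fun y => -(2 * y))
    (hφpos a ⟨le_rfl, haμ⟩) hfa hf'a
  have hW_ge := fun x (hx : x ∈ Ioo a μ) =>
    wronskian_le_wronskian hφ hφ' hf hf' (fun y hy => (hφpos y ⟨hy.1.le, hy.2⟩).le)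
      (fun _ _ => sq_nonneg p) ⟨hx.1.le, hx.2⟩ fun y hy => (hinner y ⟨hy.1, hy.2.trans hx.2⟩).le
  intro x hx
  rcases hx.2.lt_or_eq with hxμ | rfl
  · exact hinner x ⟨hx.1, hxμ⟩
  · exact pos_right_endpoint_of_wronskian_ge ha haμ hfc hf (fun y hy => (hinner y hy).le) hWa hW_ge

theorem statement5_general (μ p xs : ℝ) (hxs : 0 < xs) (hxsμ : xs < μ)
    (f : ℝ → ℝ)
    (hfc : ContinuousOn f (Set.Icc xs μ))
    (hf2 : ContDiffOn ℝ 2 f (Set.Ico xs μ))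
    (hode : ∀ x ∈ Set.Ico xs μ,
      iteratedDerivWithin 2 f (Set.Ico xs μ) x = (2 / (x ^ 2 - μ ^ 2) + p ^ 2) * f x)
    (hf0 : f xs = 0) :
    (0 < derivWithin f (Set.Ico xs μ) xs → ∀ x, xs < x → x ≤ μ → 0 < f x) ∧
    (derivWithin f (Set.Ico xs μ) xs < 0 → ∀ x, xs < x → x ≤ μ → f x < 0) := by
  have hs := uniqueDiffOn_Ico xs μ
  have hf : ∀ x ∈ Ico xs μ, HasDerivWithinAt f (derivWithin f (Ico xs μ) x) (Ico xs μ) x :=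
    fun x hx => (hf2.differentiableOn two_ne_zero x hx).hasDerivWithinAt
  have hf' : ∀ x ∈ Ico xs μ, HasDerivWithinAt (derivWithin f (Ico xs μ))
      ((2 / (x ^ 2 - μ ^ 2) + p ^ 2) * f x) (Ico xs μ) x := fun x hx =>
    hode x hx ▸ hf2.hasDerivWithinAt_derivWithin hs hx
  constructor
  · intro hd x hx hxμ
    exact ode_solution_pos_of_deriv_pos hxs.le hxsμ hfc hf hf' hf0 hd x ⟨hx, hxμ⟩
  · intro hd x hx hxμ
    refine neg_pos.1 (ode_solution_pos_of_deriv_pos (p := p) (f := fun y => -f y) hxs.le hxsμ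
      hfc.neg (fun y hy => (hf y hy).neg) (fun y hy => (hf' y hy).neg.congr_deriv (by ring))
      (by simp [hf0]) (neg_pos.2 hd) x ⟨hx, hxμ⟩)

/-- Interior-basepoint positivity for the left ODE `f'' = (2/(x²−μ²) + p²) f` on `[x*,μ)`
with `f(x*) = 0`: if `f'(x*) > 0` then `f > 0` on `(x*,μ]`, and if `f'(x*) < 0`
then `f < 0` on `(x*,μ]`. -/
theorem statement5 (μ p xs : ℝ) (hμ : 0 < μ) (hp : 0 < p) (hxs : 0 < xs) (hxsμ : xs < μ)
    (f : ℝ → ℝ)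
    (hfc : ContinuousOn f (Set.Icc xs μ))
    (hf2 : ContDiffOn ℝ 2 f (Set.Ico xs μ))
    (hode : ∀ x ∈ Set.Ico xs μ,
      iteratedDerivWithin 2 f (Set.Ico xs μ) x = (2 / (x ^ 2 - μ ^ 2) + p ^ 2) * f x)
    (hf0 : f xs = 0) :
    (0 < derivWithin f (Set.Ico xs μ) xs → ∀ x, xs < x → x ≤ μ → 0 < f x) ∧
    (derivWithin f (Set.Ico xs μ) xs < 0 → ∀ x, xs < x → x ≤ μ → f x < 0) :=
  statement5_general μ p xs hxs hxsμ f hfc hf2 hode hf0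
end

section
/- Let 0 ≤ ν < 1 and p > 0. Let f : [ν,1] → ℝ be continuous, twice continuously differentiable on (ν,1], and satisfy f''(x) = ( 2/(x²−ν²) + p² ) f(x) for all x ∈ (ν,1], with f(1) = 0 and f'(1) < 0. Then f(x) > 0 for all ν ≤ x < 1, and moreover f(x) ≥ |f'(1)| · sinh(p(1−x))/p for all ν ≤ x ≤ 1. -/
open Set Topology Real

/-!
Write the equation as `f'' - p² f = r f` with `r = 2/(x² - ν²) ≥ 0`. Wherever `f ≥ 0` this gives
`f'' ≥ p² f`, and the factorisation `∂² - p² = (∂ - p)(∂ + p)` turns it into two first-order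
inequalities, each integrated from the endpoint `1` with an exponential factor. Applied to
`f - g`, where `g x = |f'(1)| sinh(p(1 - x))/p` solves `g'' = p² g` with the same data at `1`,
this gives `f ≥ g`. Positivity follows: `f'(1) < 0` makes `f > 0` just left of `1`, and at a
last point `x₀ < 1` with `f x₀ ≤ 0` the comparison on `[x₀, 1]` would give `f x₀ ≥ g x₀ > 0`.
-/

theorem ContDiffOn.hasDerivAt_derivWithin {𝕜 F : Type*} [NontriviallyNormedField 𝕜]
    [NormedAddCommGroup F] [NormedSpace 𝕜 F] {f : 𝕜 → F} {s : Set 𝕜} {x : 𝕜}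
    (hf : ContDiffOn 𝕜 2 f s) (hs : UniqueDiffOn 𝕜 s) (hx : s ∈ 𝓝 x) :
    HasDerivAt (derivWithin f s) (iteratedDerivWithin 2 f s x) x := by
  rw [iteratedDerivWithin_succ, iteratedDerivWithin_one]
  exact ((hf.derivWithin hs (by norm_num)).differentiableOn one_ne_zero x
    (mem_of_mem_nhds hx)).hasDerivWithinAt.hasDerivAt hx

theorem eventually_pos_nhdsLT_of_hasDerivWithinAt_neg {f : ℝ → ℝ} {d b : ℝ}
    (hf : HasDerivWithinAt f d (Iio b) b) (hd : d < 0) (hb : f b = 0) :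
    ∀ᶠ y in 𝓝[<] b, 0 < f y := by
  have hslope : ∀ᶠ y in 𝓝[<] b, slope f b y < 0 :=
    (hasDerivWithinAt_iff_tendsto_slope' self_notMem_Iio).1 hf (Iio_mem_nhds hd)
  filter_upwards [hslope, self_mem_nhdsWithin] with y hy (hyb : y < b)
  rw [slope_def_field, hb, sub_zero] at hy
  exact pos_of_mul_neg_left (by simpa [div_eq_mul_inv] using hy) (inv_lt_zero.2 (sub_neg.2 hyb)).le

theorem exists_nonpos_forall_pos_Ioo {f : ℝ → ℝ} {x b : ℝ} (hf : ContinuousOn f (Icc x b))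
    (hx : f x ≤ 0) (hb : ∀ᶠ y in 𝓝[<] b, 0 < f y) (hxb : x < b) :
    ∃ x₀ ∈ Ico x b, f x₀ ≤ 0 ∧ ∀ y ∈ Ioo x₀ b, 0 < f y := by
  obtain ⟨a, hxa, hab⟩ := (mem_nhdsLT_iff_exists_mem_Ico_Ioo_subset hxb).1 hb
  set Z := Icc x a ∩ f ⁻¹' Iic 0
  have hZ : IsCompact Z := isCompact_Icc.of_isClosed_subset
    ((hf.mono (Icc_subset_Icc_right hxa.2.le)).preimage_isClosed_of_isClosed isClosed_Icc
      isClosed_Iic) inter_subset_left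
  have hx₀ : sSup Z ∈ Z := hZ.sSup_mem ⟨x, ⟨left_mem_Icc.2 hxa.1, hx⟩⟩
  refine ⟨sSup Z, ⟨hx₀.1.1, hx₀.1.2.trans_lt hxa.2⟩, hx₀.2, fun y hy => ?_⟩
  by_cases hya : a < y
  · exact hab ⟨hya, hy.2⟩
  · by_contra! hfy
    exact hy.1.not_ge (le_csSup hZ.bddAbove ⟨⟨hx₀.1.1.trans hy.1.le, not_lt.1 hya⟩, hfy⟩)

theorem nonpos_of_mul_le_hasDerivAt {W W' : ℝ → ℝ} {k x b : ℝ} (hxb : x ≤ b)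
    (hW : ContinuousOn W (Icc x b)) (hW' : ∀ y ∈ Ioo x b, HasDerivAt W (W' y) y)
    (hle : ∀ y ∈ Ioo x b, k * W y ≤ W' y) (hb : W b ≤ 0) : W x ≤ 0 := by
  have hmono : MonotoneOn (fun y => W y * exp (-k * y)) (Icc x b) := by
    refine monotoneOn_of_hasDerivWithinAt_nonneg
      (f' := fun y => (W' y - k * W y) * exp (-k * y)) (convex_Icc x b)
      (hW.mul (by fun_prop)) (fun y hy => ?_) (fun y hy => ?_) <;> rw [interior_Icc] at hy
    · have := (hW' y hy).mul ((hasDerivAt_id' y).const_mul (-k)).exp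
      exact (this.congr_deriv (by ring)).hasDerivWithinAt
    · exact mul_nonneg (sub_nonneg.2 (hle y hy)) (exp_pos _).le
  have := hmono (left_mem_Icc.2 hxb) (right_mem_Icc.2 hxb) hxb
  exact nonpos_of_mul_nonpos_left (this.trans (mul_nonpos_of_nonpos_of_nonneg hb (exp_pos _).le))
    (exp_pos _)

theorem nonneg_of_sq_mul_le_deriv2 {h h' h'' : ℝ → ℝ} {p t b : ℝ}
    (hh : ContinuousOn h (Icc t b)) (hh' : ContinuousOn h' (Ioc t b))
    (hd : ∀ y ∈ Ioo t b, HasDerivAt h (h' y) y) (hd' : ∀ y ∈ Ioo t b, HasDerivAt h' (h'' y) y)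
    (hle : ∀ y ∈ Ioo t b, p ^ 2 * h y ≤ h'' y) (hb : h b = 0) (hb' : h' b = 0) :
    ∀ x ∈ Icc t b, 0 ≤ h x := by
  have hV : ∀ x ∈ Ioc t b, h' x + p * h x ≤ 0 := by
    intro x hx
    have hsub : Icc x b ⊆ Ioc t b := Icc_subset_Ioc hx.1 le_rfl
    have hsub' : Ioo x b ⊆ Ioo t b := Ioo_subset_Ioo_left hx.1.le
    refine nonpos_of_mul_le_hasDerivAt (W := fun y => h' y + p * h y) (k := p)
      (W' := fun y => h'' y + p * h' y) hx.2
      ((hh'.mono hsub).add ((hh.mono (hsub.trans Ioc_subset_Icc_self)).const_smul p))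
      (fun y hy => (hd' y (hsub' hy)).add ((hd y (hsub' hy)).const_mul p))
      (fun y hy => ?_) (by simp [hb, hb'])
    nlinarith [hle y (hsub' hy)]
  intro x hx
  have hsub' : Ioo x b ⊆ Ioo t b := Ioo_subset_Ioo_left hx.1
  have := nonpos_of_mul_le_hasDerivAt (W := fun y => -h y) (W' := fun y => -h' y) (k := -p) hx.2
    (hh.mono (Icc_subset_Icc_left hx.1)).neg (fun y hy => (hd y (hsub' hy)).neg)
    (fun y hy => by nlinarith [hV y (Ioo_subset_Ioc_self (hsub' hy))]) (by simp [hb])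
  linarith

theorem sinh_le_of_sq_mul_le_deriv2 {f f' f'' : ℝ → ℝ} {p t b : ℝ} (hp : p ≠ 0)
    (hf : ContinuousOn f (Icc t b)) (hf' : ContinuousOn f' (Ioc t b))
    (hd : ∀ y ∈ Ioo t b, HasDerivAt f (f' y) y) (hd' : ∀ y ∈ Ioo t b, HasDerivAt f' (f'' y) y)
    (hle : ∀ y ∈ Ioo t b, p ^ 2 * f y ≤ f'' y) (hb : f b = 0) :
    ∀ x ∈ Icc t b, -f' b * (sinh (p * (b - x)) / p) ≤ f x := by
  have hlin (y : ℝ) : HasDerivAt (fun z => p * (b - z)) (-p) y := by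
    simpa using ((hasDerivAt_id y).const_sub b).const_mul p
  have hsinh (y : ℝ) : HasDerivAt (fun z => sinh (p * (b - z)) / p) (-cosh (p * (b - y))) y :=
    ((hlin y).sinh.div_const p).congr_deriv (by field_simp)
  have hcosh (y : ℝ) : HasDerivAt (fun z => cosh (p * (b - z))) (-(p * sinh (p * (b - y)))) y :=
    (hlin y).cosh.congr_deriv (by ring)
  have hle' (y : ℝ) (hy : y ∈ Ioo t b) : p ^ 2 * (f y + f' b * (sinh (p * (b - y)) / p)) ≤
      f'' y + f' b * (p * sinh (p * (b - y))) := by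
    have := hle y hy
    field_simp
    linarith
  intro x hx
  have := nonneg_of_sq_mul_le_deriv2 (h := fun y => f y + f' b * (sinh (p * (b - y)) / p))
    (h' := fun y => f' y - f' b * cosh (p * (b - y)))
    (h'' := fun y => f'' y + f' b * (p * sinh (p * (b - y))))
    (hf.add (by fun_prop)) (hf'.sub (by fun_prop))
    (fun y hy => ((hd y hy).add ((hsinh y).const_mul _)).congr_deriv (by ring))
    (fun y hy => ((hd' y hy).sub ((hcosh y).const_mul _)).congr_deriv (by ring))
    hle' (by simp [hb]) (by simp) x hx
  linarith

theorem pos_and_sinh_le_of_deriv2_eq {f f' f'' r : ℝ → ℝ} {p a b : ℝ} (hp : 0 < p)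
    (hf : ContinuousOn f (Icc a b)) (hf' : ContinuousOn f' (Ioc a b))
    (hd : ∀ y ∈ Ioo a b, HasDerivAt f (f' y) y) (hd' : ∀ y ∈ Ioo a b, HasDerivAt f' (f'' y) y)
    (hode : ∀ y ∈ Ioo a b, f'' y = (r y + p ^ 2) * f y) (hr : ∀ y ∈ Ioo a b, 0 ≤ r y)
    (hb : f b = 0) (hdb : HasDerivWithinAt f (f' b) (Iio b) b) (hf'b : f' b < 0) :
    (∀ x ∈ Ico a b, 0 < f x) ∧ ∀ x ∈ Icc a b, -f' b * (sinh (p * (b - x)) / p) ≤ f x := by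
  have hbound : ∀ t ∈ Icc a b, (∀ y ∈ Ioo t b, 0 ≤ f y) →
      ∀ x ∈ Icc t b, -f' b * (sinh (p * (b - x)) / p) ≤ f x := by
    intro t ht hf0
    have hsub : Ioo t b ⊆ Ioo a b := Ioo_subset_Ioo_left ht.1
    refine sinh_le_of_sq_mul_le_deriv2 hp.ne' (hf.mono (Icc_subset_Icc_left ht.1))
      (hf'.mono (Ioc_subset_Ioc_left ht.1)) (fun y hy => hd y (hsub hy))
      (fun y hy => hd' y (hsub hy)) (fun y hy => ?_) hb
    rw [hode y (hsub hy)]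
    nlinarith [hf0 y hy, hr y (hsub hy)]
  have hpos : ∀ x ∈ Ico a b, 0 < f x := by
    intro x hx
    by_contra! hfx
    obtain ⟨x₀, hx₀, hfx₀, hpos₀⟩ := exists_nonpos_forall_pos_Ioo
      (hf.mono (Icc_subset_Icc_left hx.1)) hfx
      (eventually_pos_nhdsLT_of_hasDerivWithinAt_neg hdb hf'b hb) hx.2
    have hle := hbound x₀ ⟨hx.1.trans hx₀.1, hx₀.2.le⟩ (fun y hy => (hpos₀ y hy).le) x₀
      (left_mem_Icc.2 hx₀.2.le)
    have : 0 < -f' b * (sinh (p * (b - x₀)) / p) :=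
      mul_pos (neg_pos.2 hf'b) (div_pos (sinh_pos_iff.2 (mul_pos hp (sub_pos.2 hx₀.2))) hp)
    linarith
  exact ⟨hpos, fun x hx => hbound a ⟨le_rfl, hx.1.trans hx.2⟩
    (fun y hy => (hpos y ⟨hy.1.le, hy.2⟩).le) x hx⟩

/-- Positivity for the right ODE `f'' = (2/(x²−ν²) + p²) f` on `(ν,1]` with `f(1)=0`,
`f'(1)<0`: then `f > 0` on `[ν,1)` and `f(x) ≥ |f'(1)| · sinh(p(1−x))/p` on `[ν,1]`. -/
theorem statement6 (ν p : ℝ) (hν : 0 ≤ ν) (hν1 : ν < 1) (hp : 0 < p) (f : ℝ → ℝ)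
    (hfc : ContinuousOn f (Set.Icc ν 1))
    (hf2 : ContDiffOn ℝ 2 f (Set.Ioc ν 1))
    (hode : ∀ x ∈ Set.Ioc ν (1:ℝ),
      iteratedDerivWithin 2 f (Set.Ioc ν 1) x = (2 / (x ^ 2 - ν ^ 2) + p ^ 2) * f x)
    (hf1 : f 1 = 0) (hf'1 : derivWithin f (Set.Ioc ν 1) 1 < 0) :
    (∀ x, ν ≤ x → x < 1 → 0 < f x) ∧
    (∀ x ∈ Set.Icc ν (1:ℝ),
      |derivWithin f (Set.Ioc ν 1) 1| * (Real.sinh (p * (1 - x)) / p) ≤ f x) := by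
  set s := Ioc ν 1
  have hs : UniqueDiffOn ℝ s := uniqueDiffOn_Ioc ν 1
  have hdiff : DifferentiableOn ℝ f s := hf2.differentiableOn two_ne_zero
  obtain ⟨hpos, hbound⟩ := pos_and_sinh_le_of_deriv2_eq (r := fun y => 2 / (y ^ 2 - ν ^ 2))
    hp hfc (hf2.continuousOn_derivWithin hs (by norm_num))
    (fun y hy => (hdiff y (Ioo_subset_Ioc_self hy)).hasDerivWithinAt.hasDerivAt
      (Ioc_mem_nhds hy.1 hy.2))
    (fun y hy => hf2.hasDerivAt_derivWithin hs (Ioc_mem_nhds hy.1 hy.2))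
    (fun y hy => hode y (Ioo_subset_Ioc_self hy))
    (fun y hy => div_nonneg zero_le_two (by nlinarith [hy.1]))
    hf1 ((hdiff 1 ⟨hν1, le_rfl⟩).hasDerivWithinAt.mono_of_mem_nhdsWithin (Ioc_mem_nhdsLT hν1)) hf'1
  refine ⟨fun x hνx hx1 => hpos x ⟨hνx, hx1⟩, fun x hx => ?_⟩
  rw [abs_of_neg hf'1]
  exact hbound x hx
end

section
/- Let 0 ≤ ν < 1, p > 0 and ν < x* < 1. Let f : [ν,x*] → ℝ be continuous, twice continuously differentiable on (ν,x*], and satisfy f''(x) = ( 2/(x²−ν²) + p² ) f(x) for all x ∈ (ν,x*], with f(x*) = 0 and f'(x*) > 0. Then f(x) < 0 for all ν ≤ x < x*. (Likewise, if f'(x*) < 0 then f(x) > 0 for all ν ≤ x < x*.) -/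
/-!
Suppose `f(x₀) ≥ 0` for some `x₀ < x*`. Since `f(x*) = 0` and `f'(x*) > 0`, `f` is negative just
left of `x*`, so its minimum over `[x₀, x*]` is negative and attained at an interior point `m`.
Near `m` the equation gives `f'' = q f < 0` with `q > 0`, so `f` is strictly concave there and
cannot have a local minimum at `m`. The case `f'(x*) < 0` is the same argument applied to `-f`.
-/

open Set Filter Topology

theorem iteratedDerivWithin_eq_iteratedDeriv_of_mem_nhds {𝕜 F : Type*}
    [NontriviallyNormedField 𝕜] [NormedAddCommGroup F] [NormedSpace 𝕜 F]
    {f : 𝕜 → F} {s : Set 𝕜} {x : 𝕜} (n : ℕ) (hs : s ∈ 𝓝 x) :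
    iteratedDerivWithin n f s x = iteratedDeriv n f x := by
  rw [iteratedDerivWithin_eq_iteratedFDerivWithin, iteratedDeriv_eq_iteratedFDeriv,
    iteratedFDerivWithin_congr_set (t := univ) ?_ n, iteratedFDerivWithin_univ]
  filter_upwards [hs] with y hy
  exact propext (iff_of_true hy trivial)

theorem HasDerivWithinAt.eventually_nhdsLT_lt {f : ℝ → ℝ} {f' b : ℝ}
    (hf : HasDerivWithinAt f f' (Iio b) b) (hf' : 0 < f') : ∀ᶠ x in 𝓝[<] b, f x < f b := by
  have hslope := (hasDerivWithinAt_iff_tendsto_slope' self_notMem_Iio).1 hf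
  filter_upwards [hslope.eventually (lt_mem_nhds hf'), self_mem_nhdsWithin] with x hpos hx
  exact (slope_pos_iff_gt hx).1 hpos

theorem not_isLocalMin_of_iteratedDeriv_two_neg {f : ℝ → ℝ} {m : ℝ}
    (hf : ∀ᶠ x in 𝓝 m, ContinuousAt f x) (hf'' : ∀ᶠ x in 𝓝 m, iteratedDeriv 2 f x < 0) :
    ¬IsLocalMin f m := by
  intro hmin
  obtain ⟨ε, hε, hball⟩ := (nhds_basis_Icc_pos m).eventually_iff.1 ((hf.and hf'').and hmin)
  have hconcave : StrictConcaveOn ℝ (Icc (m - ε) (m + ε)) f := by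
    refine strictConcaveOn_of_deriv2_neg' (convex_Icc _ _)
      (fun x hx ↦ (hball hx).1.1.continuousWithinAt) fun x hx ↦ ?_
    rw [← iteratedDeriv_eq_iterate]
    exact (hball hx).1.2
  have hleft : m - ε ∈ Icc (m - ε) (m + ε) := ⟨le_rfl, by linarith⟩
  have hright : m + ε ∈ Icc (m - ε) (m + ε) := ⟨by linarith, le_rfl⟩
  have hmid := hconcave.2 hleft hright (by linarith) (by norm_num : (0 : ℝ) < 1 / 2)
    (by norm_num : (0 : ℝ) < 1 / 2) (by norm_num)
  have hm : (1 / 2 : ℝ) • (m - ε) + (1 / 2 : ℝ) • (m + ε) = m := by simp only [smul_eq_mul]; ring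
  rw [hm, smul_eq_mul, smul_eq_mul] at hmid
  linarith [(hball hleft).2, (hball hright).2]

theorem neg_on_Ico_of_iteratedDeriv_two_eq_pos_mul {f q : ℝ → ℝ} {a b : ℝ}
    (hq : ∀ x ∈ Ioo a b, 0 < q x) (hf : ContinuousOn f (Icc a b))
    (hode : ∀ x ∈ Ioo a b, iteratedDeriv 2 f x = q x * f x)
    (hfb : 0 ≤ f b) (hneg : ∀ᶠ x in 𝓝[<] b, f x < 0) : ∀ x ∈ Ico a b, f x < 0 := by
  intro x₀ hx₀
  by_contra! hfx₀
  obtain ⟨t, hft, hx₀t, htb⟩ : ∃ t, f t < 0 ∧ x₀ < t ∧ t < b :=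
    (hneg.and (Ioo_mem_nhdsLT hx₀.2)).exists.imp fun _ h ↦ ⟨h.1, h.2⟩
  obtain ⟨m, hm, hmin⟩ := isCompact_Icc.exists_isMinOn (nonempty_Icc.2 hx₀.2.le)
    (hf.mono (Icc_subset_Icc hx₀.1 le_rfl))
  have hfm : f m < 0 := (hmin ⟨hx₀t.le, htb.le⟩).trans_lt hft
  have hx₀m : x₀ < m := hm.1.lt_of_ne (by rintro rfl; linarith)
  have hmb : m < b := hm.2.lt_of_ne (by rintro rfl; linarith)
  have hIoo : Ioo a b ∈ 𝓝 m := Ioo_mem_nhds (hx₀.1.trans_lt hx₀m) hmb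
  have hcont : ∀ᶠ x in 𝓝 m, ContinuousAt f x := by
    filter_upwards [eventually_mem_nhds_iff.2 hIoo] with x hx
    exact hf.continuousAt (mem_of_superset hx Ioo_subset_Icc_self)
  have hf'' : ∀ᶠ x in 𝓝 m, iteratedDeriv 2 f x < 0 := by
    filter_upwards [hIoo, hcont.self_of_nhds.eventually_lt continuousAt_const hfm] with x hx hfx
    rw [hode x hx]
    exact mul_neg_of_pos_of_neg (hq x hx) hfx
  exact not_isLocalMin_of_iteratedDeriv_two_neg hcont hf''
    (hmin.isLocalMin (Icc_mem_nhds hx₀m hmb))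

theorem neg_on_Ico_of_derivWithin_pos {f q : ℝ → ℝ} {a b : ℝ} (hab : a < b)
    (hq : ∀ x ∈ Ioo a b, 0 < q x) (hf : ContinuousOn f (Icc a b))
    (hode : ∀ x ∈ Ioo a b, iteratedDeriv 2 f x = q x * f x)
    (hfb : f b = 0) (hd : 0 < derivWithin f (Ioc a b) b) : ∀ x ∈ Ico a b, f x < 0 := by
  have hderiv : HasDerivWithinAt f (derivWithin f (Ioc a b) b) (Iio b) b :=
    ((differentiableWithinAt_of_derivWithin_ne_zero hd.ne').hasDerivWithinAt.mono
      Ioo_subset_Ioc_self).mono_of_mem_nhdsWithin (Ioo_mem_nhdsLT hab)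
  exact neg_on_Ico_of_iteratedDeriv_two_eq_pos_mul hq hf hode hfb.ge
    (hfb ▸ hderiv.eventually_nhdsLT_lt hd)

theorem statement7_general (ν p xs : ℝ) (hν : 0 ≤ ν)
    (hxsl : ν < xs) (f : ℝ → ℝ)
    (hfc : ContinuousOn f (Set.Icc ν xs))
    (hode : ∀ x ∈ Set.Ioc ν xs,
      iteratedDerivWithin 2 f (Set.Ioc ν xs) x = (2 / (x ^ 2 - ν ^ 2) + p ^ 2) * f x)
    (hf0 : f xs = 0) :
    (0 < derivWithin f (Set.Ioc ν xs) xs → ∀ x, ν ≤ x → x < xs → f x < 0) ∧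
    (derivWithin f (Set.Ioc ν xs) xs < 0 → ∀ x, ν ≤ x → x < xs → 0 < f x) := by
  have hq : ∀ x ∈ Ioo ν xs, 0 < 2 / (x ^ 2 - ν ^ 2) + p ^ 2 := fun x hx ↦ by
    have : 0 < x ^ 2 - ν ^ 2 := by nlinarith [hx.1]
    positivity
  have hode' : ∀ x ∈ Ioo ν xs, iteratedDeriv 2 f x = (2 / (x ^ 2 - ν ^ 2) + p ^ 2) * f x :=
    fun x hx ↦ by
      rw [← iteratedDerivWithin_eq_iteratedDeriv_of_mem_nhds 2 (Ioc_mem_nhds hx.1 hx.2)]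
      exact hode x (Ioo_subset_Ioc_self hx)
  refine ⟨fun hd x hνx hxxs ↦ neg_on_Ico_of_derivWithin_pos hxsl hq hfc hode' hf0 hd x ⟨hνx, hxxs⟩,
    fun hd x hνx hxxs ↦ ?_⟩
  have hneg := neg_on_Ico_of_derivWithin_pos (f := -f) hxsl hq hfc.neg
    (fun x hx ↦ by rw [iteratedDeriv_neg, hode' x hx, Pi.neg_apply, mul_neg])
    (by rw [Pi.neg_apply, hf0, neg_zero]) (by rw [derivWithin.neg]; linarith) x ⟨hνx, hxxs⟩
  exact neg_neg_iff_pos.1 hneg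

/-- Interior-basepoint positivity for the right ODE `f'' = (2/(x²−ν²) + p²) f` on `(ν,x*]`
with `f(x*) = 0`: if `f'(x*) > 0` then `f < 0` on `[ν,x*)`, and if `f'(x*) < 0`
then `f > 0` on `[ν,x*)`. -/
theorem statement7 (ν p xs : ℝ) (hν : 0 ≤ ν) (hν1 : ν < 1) (hp : 0 < p)
    (hxsl : ν < xs) (hxsr : xs < 1) (f : ℝ → ℝ)
    (hfc : ContinuousOn f (Set.Icc ν xs))
    (hf2 : ContDiffOn ℝ 2 f (Set.Ioc ν xs))
    (hode : ∀ x ∈ Set.Ioc ν xs,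
      iteratedDerivWithin 2 f (Set.Ioc ν xs) x = (2 / (x ^ 2 - ν ^ 2) + p ^ 2) * f x)
    (hf0 : f xs = 0) :
    (0 < derivWithin f (Set.Ioc ν xs) xs → ∀ x, ν ≤ x → x < xs → f x < 0) ∧
    (derivWithin f (Set.Ioc ν xs) xs < 0 → ∀ x, ν ≤ x → x < xs → 0 < f x) :=
  statement7_general ν p xs hν hxsl f hfc hode hf0
end

section
/- Let ε ∈ (0,1), μ > 1/2 and let n₁ < n₂ be positive integers. For i = 1,2 let f_i ∈ C²([0,1/2]) satisfy f_i''(x) = ( 2/(x²−μ²) + (1−ε)² n_i² ) f_i(x) for all x ∈ [0,1/2], with f_i(0) = 0 and f_i(1/2) = 1. Then f₁(x) > f₂(x) for all x ∈ (0,1/2), and both f₁ and f₂ are strictly positive on (0,1/2]. -/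
/-!
The function `h x = μ² - x²` is a positive solution of `h'' = 2 h / (x² - μ²)` on `[0, 1/2]`,
which is where `μ > 1/2` enters. If `f'' = (2 / (x² - μ²) + c) f`, the quotient `g = f / h`
satisfies `(h² g')' = c h² g`, and `h² g'` is the Wronskian `f' h - f h'`. For `c > 0` this gives
a minimum principle: `g` has no negative interior minimum, and no interior zero either, since
there `f` and `f'` would both vanish and uniqueness for the Cauchy problem would force `f = 0`.
Hence `f > 0` on `(0, 1/2]`. Finally the Wronskian `f₁' f₂ - f₁ f₂'` vanishes at `0` and has
derivative `(c₁ - c₂) f₁ f₂ < 0`, so `f₁ / f₂` decreases strictly on `(0, 1/2]` to the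
value `1`.
-/

open Set Filter Topology

theorem strictAntiOn_Icc_of_hasDerivWithinAt_neg {f f' : ℝ → ℝ} {s : Set ℝ} {a b : ℝ}
    (hab : Icc a b ⊆ s) (hf : ∀ x ∈ s, HasDerivWithinAt f (f' x) s x)
    (hf' : ∀ x ∈ Ioo a b, f' x < 0) : StrictAntiOn f (Icc a b) := by
  refine strictAntiOn_of_hasDerivWithinAt_neg (convex_Icc a b)
    (fun x hx => (hf x (hab hx)).continuousWithinAt.mono hab) (fun x hx => ?_)
    (by rwa [interior_Icc])
  rw [interior_Icc] at hx ⊢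
  exact (hf x (hab (Ioo_subset_Icc_self hx))).mono (Ioo_subset_Icc_self.trans hab)

theorem IsMinOn.wronskian_eq_zero {f f' g g' : ℝ → ℝ} {a b x : ℝ}
    (hf : HasDerivWithinAt f (f' x) (Icc a b) x) (hg : HasDerivWithinAt g (g' x) (Icc a b) x)
    (hmin : IsMinOn (fun t => f t / g t) (Icc a b) x) (hx : x ∈ Ioo a b) (hgx : g x ≠ 0) :
    f' x * g x - f x * g' x = 0 := by
  have hnhds : Icc a b ∈ 𝓝 x := Icc_mem_nhds hx.1 hx.2
  have := (hmin.isLocalMin hnhds).hasDerivAt_eq_zero ((hf.div hg hgx).hasDerivAt hnhds)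
  simpa [hgx] using this

/-- `f` solves `f'' = q f` on `s`, with `f'` as its derivative. -/
structure SolvesOn (q f f' : ℝ → ℝ) (s : Set ℝ) : Prop where
  hasDerivWithinAt : ∀ x ∈ s, HasDerivWithinAt f (f' x) s x
  hasDerivWithinAt_deriv : ∀ x ∈ s, HasDerivWithinAt f' (q x * f x) s x

namespace SolvesOn

variable {q r f f' g g' : ℝ → ℝ} {s t : Set ℝ} {a b c : ℝ}

theorem mono (hf : SolvesOn q f f' s) (hts : t ⊆ s) : SolvesOn q f f' t :=
  ⟨fun x hx => (hf.1 x (hts hx)).mono hts, fun x hx => (hf.2 x (hts hx)).mono hts⟩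

theorem continuousOn (hf : SolvesOn q f f' s) : ContinuousOn f s :=
  fun x hx => (hf.1 x hx).continuousWithinAt

theorem continuousOn_deriv (hf : SolvesOn q f f' s) : ContinuousOn f' s :=
  fun x hx => (hf.2 x hx).continuousWithinAt

theorem of_contDiffOn (hs : UniqueDiffOn ℝ s) (hf : ContDiffOn ℝ 2 f s)
    (hode : ∀ x ∈ s, iteratedDerivWithin 2 f s x = q x * f x) :
    SolvesOn q f (derivWithin f s) s := by
  have hf' : ContDiffOn ℝ 1 (derivWithin f s) s := hf.derivWithin hs (by norm_num)
  refine ⟨fun x hx => (hf.differentiableOn (by norm_num) x hx).hasDerivWithinAt,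
    fun x hx => ?_⟩
  rw [← hode x hx, iteratedDerivWithin_succ, iteratedDerivWithin_one]
  exact (hf'.differentiableOn one_ne_zero x hx).hasDerivWithinAt

theorem eqOn_zero (hf : SolvesOn q f f' (Icc a b)) (hq : ContinuousOn q (Icc a b))
    (ha : f a = 0) (ha' : f' a = 0) : EqOn f 0 (Icc a b) := by
  obtain ⟨C, hC⟩ := isCompact_Icc.exists_bound_of_continuousOn hq
  have hK : (0 : ℝ) ≤ max 1 C := le_max_of_le_left zero_le_one
  have key := eq_zero_of_abs_deriv_le_mul_abs_self_of_eq_zero_right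
    (f := fun x => (f x, f' x)) (f' := fun x => (f' x, q x * f x)) (K := max 1 C)
    (hf.continuousOn.prodMk hf.continuousOn_deriv)
    (fun x hx => ((hf.1 x (Ico_subset_Icc_self hx)).prodMk
      (hf.2 x (Ico_subset_Icc_self hx))).mono_of_mem_nhdsWithin (Icc_mem_nhdsGE_of_mem hx))
    (by simp [ha, ha']) fun x hx => ?_
  · exact fun x hx => congrArg Prod.fst (key x hx)
  · have hqx : ‖q x‖ ≤ max 1 C := (hC x (Ico_subset_Icc_self hx)).trans (le_max_right _ _)
    simp only [Prod.norm_def, norm_mul]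
    refine max_le ?_ ?_
    · exact (le_max_right _ _).trans (le_mul_of_one_le_left (by positivity) (le_max_left _ _))
    · exact mul_le_mul hqx (le_max_left _ _) (norm_nonneg _) hK

theorem hasDerivWithinAt_wronskian (hf : SolvesOn q f f' s) (hg : SolvesOn r g g' s)
    {x : ℝ} (hx : x ∈ s) :
    HasDerivWithinAt (fun t => f' t * g t - f t * g' t) ((q x - r x) * f x * g x) s x := by
  exact (((hf.2 x hx).mul (hg.1 x hx)).sub ((hf.1 x hx).mul (hg.2 x hx))).congr_deriv (by ring)

section GroundState

variable {h h' : ℝ → ℝ} (hf : SolvesOn (fun x => r x + c) f f' (Icc a b))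
  (hh : SolvesOn r h h' (Icc a b)) (hpos : ∀ x ∈ Icc a b, 0 < h x) (hc : 0 < c)
  (ha : f a = 0) (hb : 0 < f b)
include hf hh hpos hc ha hb

theorem nonneg_of_groundState : ∀ x ∈ Icc a b, 0 ≤ f x := by
  set g := fun t => f t / h t
  set W := fun t => f' t * h t - f t * h' t
  have hg : ∀ x ∈ Icc a b, HasDerivWithinAt g (W x / h x ^ 2) (Icc a b) x :=
    fun x hx => (hf.1 x hx).div (hh.1 x hx) (hpos x hx).ne'
  have hW : ∀ x ∈ Icc a b, HasDerivWithinAt W (c * f x * h x) (Icc a b) x :=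
    fun x hx => by simpa using hf.hasDerivWithinAt_wronskian hh hx
  intro x hx
  obtain ⟨x₀, hx₀, hmin⟩ := isCompact_Icc.exists_isMinOn ⟨x, hx⟩
    (hf.continuousOn.div hh.continuousOn fun t ht => (hpos t ht).ne')
  suffices 0 ≤ g x₀ by simpa using (le_div_iff₀ (hpos x hx)).1 (this.trans (hmin hx))
  by_contra! hneg
  have hx₀a : x₀ ≠ a := by rintro rfl; simp [g, ha] at hneg
  have hx₀b : x₀ ≠ b := by rintro rfl; exact (div_pos hb (hpos _ hx₀)).not_gt hneg
  have hx₀' : x₀ ∈ Ioo a b := ⟨hx₀.1.lt_of_ne' hx₀a, hx₀.2.lt_of_ne hx₀b⟩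
  have hWx₀ : W x₀ = 0 :=
    hmin.wronskian_eq_zero (hf.1 x₀ hx₀) (hh.1 x₀ hx₀) hx₀' (hpos x₀ hx₀).ne'
  have hfx₀ : f x₀ < 0 := by
    simpa [g, (hpos x₀ hx₀).ne'] using mul_neg_of_neg_of_pos hneg (hpos x₀ hx₀)
  have hIcc : Icc a b ∈ 𝓝 x₀ := Icc_mem_nhds hx₀'.1 hx₀'.2
  have hnhds : f ⁻¹' Iio 0 ∩ Icc a b ∈ 𝓝[≥] x₀ := nhdsWithin_le_nhds <| inter_mem
    (((hf.1 x₀ hx₀).continuousWithinAt.continuousAt hIcc).preimage_mem_nhds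
      (Iio_mem_nhds hfx₀)) hIcc
  obtain ⟨x₁, hx₀x₁, hsub⟩ := mem_nhdsGE_iff_exists_Icc_subset.1 hnhds
  -- `W` decreases from `0` while `f < 0`, so `g` decreases below its minimum
  have hWanti : StrictAntiOn W (Icc x₀ x₁) :=
    strictAntiOn_Icc_of_hasDerivWithinAt_neg (fun t ht => (hsub ht).2) hW fun t ht =>
      mul_neg_of_neg_of_pos (mul_neg_of_pos_of_neg hc (hsub (Ioo_subset_Icc_self ht)).1)
        (hpos t (hsub (Ioo_subset_Icc_self ht)).2)
  have hganti : StrictAntiOn g (Icc x₀ x₁) :=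
    strictAntiOn_Icc_of_hasDerivWithinAt_neg (fun t ht => (hsub ht).2) hg fun t ht =>
      div_neg_of_neg_of_pos
        (hWx₀ ▸ hWanti (left_mem_Icc.2 hx₀x₁.le) (Ioo_subset_Icc_self ht) ht.1)
        (pow_pos (hpos t (hsub (Ioo_subset_Icc_self ht)).2) 2)
  exact (hganti (left_mem_Icc.2 hx₀x₁.le) (right_mem_Icc.2 hx₀x₁.le) hx₀x₁).not_ge
    (hmin (hsub (right_mem_Icc.2 hx₀x₁.le)).2)

theorem pos_of_groundState (hr : ContinuousOn r (Icc a b)) : ∀ x ∈ Ioc a b, 0 < f x := by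
  have hnonneg := nonneg_of_groundState hf hh hpos hc ha hb
  intro x hx
  rcases hx.2.eq_or_lt with rfl | hxb
  · exact hb
  have hx' : x ∈ Icc a b := Ioc_subset_Icc_self hx
  refine (hnonneg x hx').lt_of_ne' fun hfx => ?_
  have hmin : IsMinOn (fun t => f t / h t) (Icc a b) x := fun t ht => by
    simpa [hfx] using div_nonneg (hnonneg t ht) (hpos t ht).le
  have hf'x : f' x = 0 := by
    simpa [hfx, (hpos x hx').ne'] using
      hmin.wronskian_eq_zero (hf.1 x hx') (hh.1 x hx') ⟨hx.1, hxb⟩ (hpos x hx').ne'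
  have hzero := (hf.mono (Icc_subset_Icc_left hx.1.le)).eqOn_zero
    ((hr.add continuousOn_const).mono (Icc_subset_Icc_left hx.1.le)) hfx hf'x
  exact hb.ne' (hzero (right_mem_Icc.2 hxb.le))

end GroundState

theorem lt_of_lt (hf : SolvesOn q f f' (Icc a b)) (hg : SolvesOn r g g' (Icc a b))
    (hqr : ∀ x ∈ Ioo a b, q x < r x) (hfpos : ∀ x ∈ Ioo a b, 0 < f x)
    (hgpos : ∀ x ∈ Ioc a b, 0 < g x) (hfa : f a = 0) (hga : g a = 0) (hb : f b = g b) :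
    ∀ x ∈ Ioo a b, g x < f x := by
  set W := fun t => f' t * g t - f t * g' t
  have hWanti : StrictAntiOn W (Icc a b) :=
    strictAntiOn_Icc_of_hasDerivWithinAt_neg subset_rfl
      (fun x hx => hf.hasDerivWithinAt_wronskian hg hx) fun x hx =>
        mul_neg_of_neg_of_pos (mul_neg_of_neg_of_pos (sub_neg.2 (hqr x hx)) (hfpos x hx))
          (hgpos x (Ioo_subset_Ioc_self hx))
  have hWa : W a = 0 := by simp [W, hfa, hga]
  intro x hx
  have hxb : Icc x b ⊆ Icc a b := Icc_subset_Icc_left hx.1.le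
  have hgx : ∀ t ∈ Icc x b, 0 < g t := fun t ht => hgpos t ⟨hx.1.trans_le ht.1, ht.2⟩
  have hratio : StrictAntiOn (fun t => f t / g t) (Icc x b) :=
    strictAntiOn_Icc_of_hasDerivWithinAt_neg subset_rfl
      (fun t ht => ((hf.1 t (hxb ht)).mono hxb).div ((hg.1 t (hxb ht)).mono hxb) (hgx t ht).ne')
      fun t ht => div_neg_of_neg_of_pos
        (hWa ▸ hWanti (left_mem_Icc.2 (hx.1.le.trans hx.2.le)) (hxb (Ioo_subset_Icc_self ht))
          (hx.1.trans ht.1))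
        (pow_pos (hgx t (Ioo_subset_Icc_self ht)) 2)
  have : f b / g b < f x / g x := hratio (left_mem_Icc.2 hx.2.le) (right_mem_Icc.2 hx.2.le) hx.2
  rw [hb, div_self (hgx b (right_mem_Icc.2 hx.2.le)).ne'] at this
  exact (one_lt_div (hgx x (left_mem_Icc.2 hx.2.le))).1 this

end SolvesOn

theorem solvesOn_sq_sub_sq {μ : ℝ} {s : Set ℝ} (hs : ∀ x ∈ s, x ^ 2 ≠ μ ^ 2) :
    SolvesOn (fun x => 2 / (x ^ 2 - μ ^ 2)) (fun x => μ ^ 2 - x ^ 2) (fun x => -(2 * x)) s := by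
  refine ⟨fun x _ => ?_, fun x hx => ?_⟩
  · simpa using ((hasDerivAt_pow 2 x).const_sub (μ ^ 2)).hasDerivWithinAt
  · have hx : x ^ 2 - μ ^ 2 ≠ 0 := sub_ne_zero.2 (hs x hx)
    refine ((hasDerivAt_id x).const_mul 2).neg.hasDerivWithinAt.congr_deriv ?_
    field_simp
    ring

theorem SolvesOn.pos_of_sq_lt_sq {f f' : ℝ → ℝ} {a b μ c : ℝ}
    (hf : SolvesOn (fun x => 2 / (x ^ 2 - μ ^ 2) + c) f f' (Icc a b))
    (hμ : ∀ x ∈ Icc a b, x ^ 2 < μ ^ 2) (hc : 0 < c) (ha : f a = 0) (hb : 0 < f b) :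
    ∀ x ∈ Ioc a b, 0 < f x :=
  hf.pos_of_groundState (solvesOn_sq_sub_sq fun x hx => (hμ x hx).ne)
    (fun x hx => sub_pos.2 (hμ x hx)) hc ha hb
    (continuousOn_const.div (by fun_prop) fun x hx => sub_ne_zero.2 (hμ x hx).ne)

/-- Monotonicity in the frequency on the left interval: for `μ > 1/2`, `ε ∈ (0,1)` and
positive integers `n₁ < n₂`, the solutions `fᵢ` of `fᵢ'' = (2/(x²−μ²) + (1−ε)²nᵢ²) fᵢ`
on `[0,1/2]` with `fᵢ(0)=0`, `fᵢ(1/2)=1` satisfy `f₁ > f₂` on `(0,1/2)` and both are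
strictly positive on `(0,1/2]`. -/
theorem statement9 (ε μ : ℝ) (hε : ε ∈ Set.Ioo (0:ℝ) 1) (hμ : 1 / 2 < μ)
    (n₁ n₂ : ℕ) (hn₁ : 0 < n₁) (hn : n₁ < n₂) (f₁ f₂ : ℝ → ℝ)
    (hf₁ : ContDiffOn ℝ 2 f₁ (Set.Icc 0 (1 / 2)))
    (hf₂ : ContDiffOn ℝ 2 f₂ (Set.Icc 0 (1 / 2)))
    (hode₁ : ∀ x ∈ Set.Icc (0:ℝ) (1 / 2),
      iteratedDerivWithin 2 f₁ (Set.Icc 0 (1 / 2)) x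
        = (2 / (x ^ 2 - μ ^ 2) + (1 - ε) ^ 2 * (n₁ : ℝ) ^ 2) * f₁ x)
    (hode₂ : ∀ x ∈ Set.Icc (0:ℝ) (1 / 2),
      iteratedDerivWithin 2 f₂ (Set.Icc 0 (1 / 2)) x
        = (2 / (x ^ 2 - μ ^ 2) + (1 - ε) ^ 2 * (n₂ : ℝ) ^ 2) * f₂ x)
    (h₁0 : f₁ 0 = 0) (h₁12 : f₁ (1 / 2) = 1)
    (h₂0 : f₂ 0 = 0) (h₂12 : f₂ (1 / 2) = 1) :
    (∀ x ∈ Set.Ioo (0:ℝ) (1 / 2), f₂ x < f₁ x) ∧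
    (∀ x ∈ Set.Ioc (0:ℝ) (1 / 2), 0 < f₁ x ∧ 0 < f₂ x) := by
  have hI : UniqueDiffOn ℝ (Icc (0:ℝ) (1 / 2)) := uniqueDiffOn_Icc (by norm_num)
  have hμI : ∀ x ∈ Icc (0:ℝ) (1 / 2), x ^ 2 < μ ^ 2 := fun x hx => by nlinarith [hx.1, hx.2]
  have hε₁ : 0 < 1 - ε := sub_pos.2 hε.2
  have hc₁ : 0 < (1 - ε) ^ 2 * (n₁ : ℝ) ^ 2 := by positivity
  have hc : (1 - ε) ^ 2 * (n₁ : ℝ) ^ 2 < (1 - ε) ^ 2 * (n₂ : ℝ) ^ 2 := by gcongr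
  have sol₁ := SolvesOn.of_contDiffOn
    (q := fun x => 2 / (x ^ 2 - μ ^ 2) + (1 - ε) ^ 2 * (n₁ : ℝ) ^ 2) hI hf₁ hode₁
  have sol₂ := SolvesOn.of_contDiffOn
    (q := fun x => 2 / (x ^ 2 - μ ^ 2) + (1 - ε) ^ 2 * (n₂ : ℝ) ^ 2) hI hf₂ hode₂
  have pos₁ := sol₁.pos_of_sq_lt_sq hμI hc₁ h₁0 (by rw [h₁12]; exact one_pos)
  have pos₂ := sol₂.pos_of_sq_lt_sq hμI (hc₁.trans hc) h₂0 (by rw [h₂12]; exact one_pos)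
  refine ⟨sol₁.lt_of_lt sol₂ (fun x _ => by simpa using hc)
    (fun x hx => pos₁ x (Ioo_subset_Ioc_self hx)) pos₂ h₁0 h₂0 (h₁12.trans h₂12.symm),
    fun x hx => ⟨pos₁ x hx, pos₂ x hx⟩⟩
end

section
/- Let ε ∈ (0,1), 0 ≤ ν < 1/2 and let n₁ < n₂ be positive integers. For i = 1,2 let f_i ∈ C²([1/2,1]) satisfy f_i''(x) = ( 2/(x²−ν²) + (1−ε)² n_i² ) f_i(x) for all x ∈ [1/2,1], with f_i(1) = 0 and f_i(1/2) = 1. Then f₁(x) > f₂(x) for all x ∈ (1/2,1), and both f₁ and f₂ are strictly positive on [1/2,1). -/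
/-!
On `[1/2, 1]` the potential `q n x = 2 / (x² - ν²) + (1 - ε)² n²` is continuous, positive and
strictly increasing in `n`. For `f'' = q f` with `q > 0` a negative minimum is impossible
(there `f' = 0` and `f'' < 0`), so a solution that is nonnegative at both ends is nonnegative;
an interior zero would then be a double zero, and uniqueness for the initial value problem
would force `f ≡ 0` on the left of it. For the comparison, the Wronskian
`W = f₁' f₂ - f₁ f₂'` vanishes at `1` and `W' = (q₁ - q₂) f₁ f₂ < 0`, so `W > 0` on `[1/2, 1)`;
hence `(f₁ / f₂)' = W / f₂² > 0` and `f₁ / f₂` increases from its value `1` at `1/2`.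
-/

open Set Topology

/-- `f` solves `f'' = q f` on `[a, b]`, with `f'` as its derivative. -/
structure SolvesLinearODE (q f f' : ℝ → ℝ) (a b : ℝ) : Prop where
  continuousOn : ContinuousOn f (Icc a b)
  continuousOn_deriv : ContinuousOn f' (Icc a b)
  hasDerivAt : ∀ x ∈ Ioo a b, HasDerivAt f (f' x) x
  hasDerivAt_deriv : ∀ x ∈ Ioo a b, HasDerivAt f' (q x * f x) x

namespace SolvesLinearODE

variable {q f f' : ℝ → ℝ} {a b : ℝ}

theorem of_contDiffOn (hab : a < b) (hf : ContDiffOn ℝ 2 f (Icc a b))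
    (hode : ∀ x ∈ Ioo a b, iteratedDerivWithin 2 f (Icc a b) x = q x * f x) :
    SolvesLinearODE q f (derivWithin f (Icc a b)) a b := by
  have hu : UniqueDiffOn ℝ (Icc a b) := uniqueDiffOn_Icc hab
  have hf' : ContDiffOn ℝ 1 (derivWithin f (Icc a b)) (Icc a b) := hf.derivWithin hu le_rfl
  refine ⟨hf.continuousOn, hf'.continuousOn, fun x hx => ?_, fun x hx => ?_⟩
  · exact ((hf.differentiableOn two_ne_zero) x (Ioo_subset_Icc_self hx)).hasDerivWithinAt
      |>.hasDerivAt (Icc_mem_nhds hx.1 hx.2)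
  · rw [← hode x hx, iteratedDerivWithin_eq_iterate]
    exact ((hf'.differentiableOn one_ne_zero) x (Ioo_subset_Icc_self hx)).hasDerivWithinAt
      |>.hasDerivAt (Icc_mem_nhds hx.1 hx.2)

theorem eqOn_zero_of_eq_zero (h : SolvesLinearODE q f f' a b) (hq : ContinuousOn q (Icc a b))
    {c : ℝ} (hcb : c < b) (hfc : f c = 0) (hf'c : f' c = 0) : EqOn f 0 (Icc a c) := by
  obtain ⟨K, hK⟩ := (isCompact_Icc.image_of_continuousOn hq.nnnorm).bddAbove
  have hlip : ∀ t ∈ Ioc a c,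
      LipschitzOnWith (max 1 K) (fun p : ℝ × ℝ => (p.2, q t * p.1)) univ := by
    intro t ht
    have hqt : ‖q t‖₊ ≤ K := hK ⟨t, ⟨ht.1.le, ht.2.trans hcb.le⟩, rfl⟩
    refine (LipschitzWith.weaken ?_ (max_le_max le_rfl hqt)).lipschitzOnWith
    have := (LipschitzWith.prod_snd (α := ℝ) (β := ℝ)).prodMk
      ((lipschitzWith_smul (q t)).comp LipschitzWith.prod_fst)
    rwa [mul_one] at this
  have hsub : Icc a c ⊆ Icc a b := Icc_subset_Icc_right hcb.le
  have hzero := ODE_solution_unique_of_mem_Icc_left (f := fun t => (f t, f' t)) (g := 0) hlip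
    ((h.continuousOn.mono hsub).prodMk (h.continuousOn_deriv.mono hsub))
    (fun t ht => ((h.hasDerivAt t ⟨ht.1, ht.2.trans_lt hcb⟩).prodMk
      (h.hasDerivAt_deriv t ⟨ht.1, ht.2.trans_lt hcb⟩)).hasDerivWithinAt)
    (fun _ _ => mem_univ _) continuousOn_const
    (fun t _ => (hasDerivWithinAt_const t (Iic t) (0 : ℝ × ℝ)).congr_deriv (by ext <;> simp))
    (fun _ _ => mem_univ _) (by simp [hfc, hf'c])
  exact fun t ht => congrArg Prod.fst (hzero ht)

theorem nonneg (h : SolvesLinearODE q f f' a b) (hq : ∀ x ∈ Ioo a b, 0 < q x)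
    (ha : 0 ≤ f a) (hb : 0 ≤ f b) : ∀ x ∈ Icc a b, 0 ≤ f x := by
  by_contra! ⟨x, hx, hfx⟩
  obtain ⟨m, hm, hmin⟩ := isCompact_Icc.exists_isMinOn ⟨x, hx⟩ h.continuousOn
  have hfm : f m < 0 := (hmin hx).trans_lt hfx
  have hm' : m ∈ Ioo a b :=
    ⟨hm.1.lt_of_ne (by rintro rfl; linarith), hm.2.lt_of_ne (by rintro rfl; linarith)⟩
  have hf'm : f' m = 0 :=
    (hmin.isLocalMin (Icc_mem_nhds hm'.1 hm'.2)).hasDerivAt_eq_zero (h.hasDerivAt m hm')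
  have hnhds : Ioo a b ∩ {y | f y < 0} ∈ 𝓝 m :=
    Filter.inter_mem (Ioo_mem_nhds hm'.1 hm'.2)
      ((h.hasDerivAt m hm').continuousAt.eventually_lt continuousAt_const hfm)
  obtain ⟨l, hlm, hsub⟩ := exists_Ioc_subset_of_mem_nhds hnhds ⟨a, hm'.1⟩
  have hanti : StrictAntiOn f' (Ioc l m) := by
    refine strictAntiOn_of_hasDerivWithinAt_neg (f' := fun y => q y * f y) (convex_Ioc l m)
      (HasDerivAt.continuousOn fun y hy => h.hasDerivAt_deriv y (hsub hy).1) ?_ ?_ <;>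
    simp only [interior_Ioc] <;> intro y hy
    · exact (h.hasDerivAt_deriv y (hsub (Ioo_subset_Ioc_self hy)).1).hasDerivWithinAt
    · exact mul_neg_of_pos_of_neg (hq y (hsub (Ioo_subset_Ioc_self hy)).1)
        (hsub (Ioo_subset_Ioc_self hy)).2
  have hmono : StrictMonoOn f (Ioc l m) := by
    refine strictMonoOn_of_hasDerivWithinAt_pos (f' := f') (convex_Ioc l m)
      (HasDerivAt.continuousOn fun y hy => h.hasDerivAt y (hsub hy).1) ?_ ?_ <;>
    simp only [interior_Ioc] <;> intro y hy
    · exact (h.hasDerivAt y (hsub (Ioo_subset_Ioc_self hy)).1).hasDerivWithinAt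
    · exact hf'm ▸ hanti (Ioo_subset_Ioc_self hy) (right_mem_Ioc.2 hlm) hy.2
  have hy : (l + m) / 2 ∈ Ioc l m := ⟨by linarith, by linarith⟩
  exact (hmono hy (right_mem_Ioc.2 hlm) (by linarith)).not_ge
    (hmin (Ioo_subset_Icc_self (hsub hy).1))

theorem pos (h : SolvesLinearODE q f f' a b) (hqc : ContinuousOn q (Icc a b))
    (hq : ∀ x ∈ Ioo a b, 0 < q x) (ha : 0 < f a) (hb : 0 ≤ f b) : ∀ x ∈ Ico a b, 0 < f x := by
  have hnonneg := h.nonneg hq ha.le hb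
  intro x hx
  refine (hnonneg x (Ico_subset_Icc_self hx)).lt_of_ne' fun hfx => ?_
  have hax : a < x := hx.1.lt_of_ne (by rintro rfl; linarith)
  have hmin : IsLocalMin f x := Filter.mem_of_superset (Ioo_mem_nhds hax hx.2) fun y hy =>
    hfx ▸ hnonneg y (Ioo_subset_Icc_self hy)
  have hf'x : f' x = 0 := hmin.hasDerivAt_eq_zero (h.hasDerivAt x ⟨hax, hx.2⟩)
  have hfa : f a = 0 := h.eqOn_zero_of_eq_zero hqc hx.2 hfx hf'x (left_mem_Icc.2 hx.1)
  linarith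

section Comparison

variable {q₁ q₂ f₁ f₂ f₁' f₂' : ℝ → ℝ}

theorem wronskian_pos (h₁ : SolvesLinearODE q₁ f₁ f₁' a b) (h₂ : SolvesLinearODE q₂ f₂ f₂' a b)
    (hq : ∀ x ∈ Ioo a b, q₁ x < q₂ x) (hf₁ : ∀ x ∈ Ioo a b, 0 < f₁ x)
    (hf₂ : ∀ x ∈ Ioo a b, 0 < f₂ x) (hb₁ : f₁ b = 0) (hb₂ : f₂ b = 0) :
    ∀ x ∈ Ico a b, 0 < f₁' x * f₂ x - f₁ x * f₂' x := by
  have hanti : StrictAntiOn (fun x => f₁' x * f₂ x - f₁ x * f₂' x) (Icc a b) := by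
    refine strictAntiOn_of_hasDerivWithinAt_neg
      (f' := fun x => (q₁ x - q₂ x) * (f₁ x * f₂ x)) (convex_Icc a b)
      ((h₁.continuousOn_deriv.mul h₂.continuousOn).sub (h₁.continuousOn.mul h₂.continuousOn_deriv))
      ?_ ?_ <;> simp only [interior_Icc] <;> intro x hx
    · refine (((h₁.hasDerivAt_deriv x hx).mul (h₂.hasDerivAt x hx)).sub
        ((h₁.hasDerivAt x hx).mul (h₂.hasDerivAt_deriv x hx))).hasDerivWithinAt.congr_deriv ?_
      ring
    · exact mul_neg_of_neg_of_pos (sub_neg.2 (hq x hx)) (mul_pos (hf₁ x hx) (hf₂ x hx))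
  intro x hx
  simpa [hb₁, hb₂] using hanti (Ico_subset_Icc_self hx) (right_mem_Icc.2 (hx.1.trans hx.2.le)) hx.2

theorem lt_of_potential_lt (h₁ : SolvesLinearODE q₁ f₁ f₁' a b)
    (h₂ : SolvesLinearODE q₂ f₂ f₂' a b) (hq : ∀ x ∈ Ioo a b, q₁ x < q₂ x)
    (hf₁ : ∀ x ∈ Ioo a b, 0 < f₁ x) (hf₂ : ∀ x ∈ Ico a b, 0 < f₂ x) (hb₁ : f₁ b = 0)
    (hb₂ : f₂ b = 0) (ha : f₂ a ≤ f₁ a) : ∀ x ∈ Ioo a b, f₂ x < f₁ x := by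
  have hW := wronskian_pos h₁ h₂ hq hf₁ (fun x hx => hf₂ x (Ioo_subset_Ico_self hx)) hb₁ hb₂
  have hmono : StrictMonoOn (f₁ / f₂) (Ico a b) := by
    refine strictMonoOn_of_hasDerivWithinAt_pos
      (f' := fun x => (f₁' x * f₂ x - f₁ x * f₂' x) / f₂ x ^ 2) (convex_Ico a b)
      ((h₁.continuousOn.mono Ico_subset_Icc_self).div (h₂.continuousOn.mono Ico_subset_Icc_self)
        fun x hx => (hf₂ x hx).ne') ?_ ?_ <;> simp only [interior_Ico] <;> intro x hx
    · exact ((h₁.hasDerivAt x hx).div (h₂.hasDerivAt x hx)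
        (hf₂ x (Ioo_subset_Ico_self hx)).ne').hasDerivWithinAt
    · exact div_pos (hW x (Ioo_subset_Ico_self hx)) (pow_pos (hf₂ x (Ioo_subset_Ico_self hx)) 2)
  intro x hx
  have hax := hmono (left_mem_Ico.2 (hx.1.trans hx.2)) (Ioo_subset_Ico_self hx) hx.1
  have hfa := hf₂ a (left_mem_Ico.2 (hx.1.trans hx.2))
  have hfx := hf₂ x (Ioo_subset_Ico_self hx)
  rw [Pi.div_apply, Pi.div_apply, div_lt_div_iff₀ hfa hfx] at hax
  nlinarith

end Comparison

end SolvesLinearODE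

theorem statement10_general (ε ν : ℝ) (hε : ε ∈ Set.Ioo (0:ℝ) 1) (hν : 0 ≤ ν) (hν' : ν < 1 / 2)
    (n₁ n₂ : ℕ) (hn : n₁ < n₂) (f₁ f₂ : ℝ → ℝ)
    (hf₁ : ContDiffOn ℝ 2 f₁ (Set.Icc (1 / 2) 1))
    (hf₂ : ContDiffOn ℝ 2 f₂ (Set.Icc (1 / 2) 1))
    (hode₁ : ∀ x ∈ Set.Icc (1 / 2 : ℝ) 1,
      iteratedDerivWithin 2 f₁ (Set.Icc (1 / 2) 1) x
        = (2 / (x ^ 2 - ν ^ 2) + (1 - ε) ^ 2 * (n₁ : ℝ) ^ 2) * f₁ x)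
    (hode₂ : ∀ x ∈ Set.Icc (1 / 2 : ℝ) 1,
      iteratedDerivWithin 2 f₂ (Set.Icc (1 / 2) 1) x
        = (2 / (x ^ 2 - ν ^ 2) + (1 - ε) ^ 2 * (n₂ : ℝ) ^ 2) * f₂ x)
    (h₁1 : f₁ 1 = 0) (h₁12 : f₁ (1 / 2) = 1)
    (h₂1 : f₂ 1 = 0) (h₂12 : f₂ (1 / 2) = 1) :
    (∀ x ∈ Set.Ioo (1 / 2 : ℝ) 1, f₂ x < f₁ x) ∧
    (∀ x ∈ Set.Ico (1 / 2 : ℝ) 1, 0 < f₁ x ∧ 0 < f₂ x) := by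
  have hden : ∀ x ∈ Icc (1 / 2 : ℝ) 1, 0 < x ^ 2 - ν ^ 2 := fun x hx => by nlinarith [hx.1]
  have hqc (n : ℕ) :
      ContinuousOn (fun x => 2 / (x ^ 2 - ν ^ 2) + (1 - ε) ^ 2 * (n : ℝ) ^ 2) (Icc (1 / 2) 1) :=
    (continuousOn_const.div (by fun_prop) fun x hx => (hden x hx).ne').add continuousOn_const
  have hq (n : ℕ) : ∀ x ∈ Ioo (1 / 2 : ℝ) 1, 0 < 2 / (x ^ 2 - ν ^ 2) + (1 - ε) ^ 2 * (n : ℝ) ^ 2 :=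
    fun x hx => by have := hden x (Ioo_subset_Icc_self hx); positivity
  have hq₁₂ (x : ℝ) : 2 / (x ^ 2 - ν ^ 2) + (1 - ε) ^ 2 * (n₁ : ℝ) ^ 2
      < 2 / (x ^ 2 - ν ^ 2) + (1 - ε) ^ 2 * (n₂ : ℝ) ^ 2 := by
    have : 0 < (1 - ε) ^ 2 := pow_pos (sub_pos.2 hε.2) 2
    gcongr
  have hs₁ := SolvesLinearODE.of_contDiffOn (by norm_num) hf₁
    fun x hx => hode₁ x (Ioo_subset_Icc_self hx)
  have hs₂ := SolvesLinearODE.of_contDiffOn (by norm_num) hf₂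
    fun x hx => hode₂ x (Ioo_subset_Icc_self hx)
  have hpos₁ := hs₁.pos (hqc n₁) (hq n₁) (by norm_num [h₁12]) h₁1.ge
  have hpos₂ := hs₂.pos (hqc n₂) (hq n₂) (by norm_num [h₂12]) h₂1.ge
  refine ⟨hs₁.lt_of_potential_lt hs₂ (fun x _ => hq₁₂ x)
    (fun x hx => hpos₁ x (Ioo_subset_Ico_self hx)) hpos₂ h₁1 h₂1 (by rw [h₁12, h₂12]), ?_⟩
  exact fun x hx => ⟨hpos₁ x hx, hpos₂ x hx⟩

/-- Monotonicity in the frequency on the right interval: for `0 ≤ ν < 1/2`, `ε ∈ (0,1)` and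
positive integers `n₁ < n₂`, the solutions `fᵢ` of `fᵢ'' = (2/(x²−ν²) + (1−ε)²nᵢ²) fᵢ`
on `[1/2,1]` with `fᵢ(1)=0`, `fᵢ(1/2)=1` satisfy `f₁ > f₂` on `(1/2,1)` and both are
strictly positive on `[1/2,1)`. -/
theorem statement10 (ε ν : ℝ) (hε : ε ∈ Set.Ioo (0:ℝ) 1) (hν : 0 ≤ ν) (hν' : ν < 1 / 2)
    (n₁ n₂ : ℕ) (hn₁ : 0 < n₁) (hn : n₁ < n₂) (f₁ f₂ : ℝ → ℝ)
    (hf₁ : ContDiffOn ℝ 2 f₁ (Set.Icc (1 / 2) 1))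
    (hf₂ : ContDiffOn ℝ 2 f₂ (Set.Icc (1 / 2) 1))
    (hode₁ : ∀ x ∈ Set.Icc (1 / 2 : ℝ) 1,
      iteratedDerivWithin 2 f₁ (Set.Icc (1 / 2) 1) x
        = (2 / (x ^ 2 - ν ^ 2) + (1 - ε) ^ 2 * (n₁ : ℝ) ^ 2) * f₁ x)
    (hode₂ : ∀ x ∈ Set.Icc (1 / 2 : ℝ) 1,
      iteratedDerivWithin 2 f₂ (Set.Icc (1 / 2) 1) x
        = (2 / (x ^ 2 - ν ^ 2) + (1 - ε) ^ 2 * (n₂ : ℝ) ^ 2) * f₂ x)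
    (h₁1 : f₁ 1 = 0) (h₁12 : f₁ (1 / 2) = 1)
    (h₂1 : f₂ 1 = 0) (h₂12 : f₂ (1 / 2) = 1) :
    (∀ x ∈ Set.Ioo (1 / 2 : ℝ) 1, f₂ x < f₁ x) ∧
    (∀ x ∈ Set.Ico (1 / 2 : ℝ) 1, 0 < f₁ x ∧ 0 < f₂ x) :=
  statement10_general ε ν hε hν hν' n₁ n₂ hn f₁ f₂ hf₁ hf₂ hode₁ hode₂ h₁1 h₁12 h₂1 h₂12
end

section
/- Let 0 ≤ ν < 1/2 and p₁, p₂ > 0. For i = 1,2 let f_i ∈ C²([1/2,1]) satisfy f_i''(x) = ( 2/(x²−ν²) + p_i² ) f_i(x) for all x ∈ [1/2,1], with f_i(1) = 0 and f_i(1/2) = 1. Then f₁'(1/2) − f₂'(1/2) = (p₂² − p₁²) ∫_{1/2}^1 f₁(w) f₂(w) dw. In particular, if additionally f₁'(1) < 0 and f₂'(1) < 0 and p₁ < p₂, then f₁'(1/2) > f₂'(1/2). -/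
/-!
Integrating the derivative `(f₁'f₂ - f₁f₂')' = f₁''f₂ - f₁f₂'' = (p₁² - p₂²) f₁f₂` of the Wronskian
over `[1/2, 1]` and using the boundary values gives the identity. For the inequality, the
coefficient `q = 2/(x² - ν²) + p²` is nonnegative on `[1/2, 1]`, so the energy `f f'` of a solution
of `f'' = q f` is nondecreasing, hence `f f' ≤ f(1) f'(1) = 0` and `f²` is nonincreasing. A zero of
`f` before `1` would then make `f` vanish near `1`, contradicting `f'(1) < 0`; so both `fᵢ` are
positive on `[1/2, 1)` and the integral is positive.
-/

open Set Topology

section Icc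

variable {a b : ℝ} {f f₁ f₂ q : ℝ → ℝ}

lemma iteratedDerivWithin_two_eq (s : Set ℝ) (x : ℝ) :
    iteratedDerivWithin 2 f s x = derivWithin (derivWithin f s) s x := by
  rw [iteratedDerivWithin_eq_iterate]; rfl

lemma DifferentiableOn.hasDerivAt_derivWithin_Icc (hf : DifferentiableOn ℝ f (Icc a b)) {x : ℝ}
    (hx : x ∈ Ioo a b) : HasDerivAt f (derivWithin f (Icc a b) x) x := by
  have hs : Icc a b ∈ 𝓝 x := Icc_mem_nhds hx.1 hx.2
  rw [derivWithin_of_mem_nhds hs]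
  exact ((hf x (Ioo_subset_Icc_self hx)).differentiableAt hs).hasDerivAt

lemma ContDiffOn.hasDerivAt_derivWithin_derivWithin_Icc (hf : ContDiffOn ℝ 2 f (Icc a b))
    {x : ℝ} (hx : x ∈ Ioo a b) :
    HasDerivAt (derivWithin f (Icc a b)) (iteratedDerivWithin 2 f (Icc a b) x) x := by
  rw [iteratedDerivWithin_two_eq]
  refine ((hf.derivWithin (uniqueDiffOn_Icc (hx.1.trans hx.2)) ?_).differentiableOn
    one_ne_zero).hasDerivAt_derivWithin_Icc hx
  norm_num

noncomputable def wronskianWithin (s : Set ℝ) (f₁ f₂ : ℝ → ℝ) (x : ℝ) : ℝ :=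
  derivWithin f₁ s x * f₂ x - f₁ x * derivWithin f₂ s x

theorem integral_eq_sub_wronskianWithin (hab : a < b) (hf₁ : ContDiffOn ℝ 2 f₁ (Icc a b))
    (hf₂ : ContDiffOn ℝ 2 f₂ (Icc a b)) :
    ∫ x in a..b, (iteratedDerivWithin 2 f₁ (Icc a b) x * f₂ x
        - f₁ x * iteratedDerivWithin 2 f₂ (Icc a b) x)
      = wronskianWithin (Icc a b) f₁ f₂ b - wronskianWithin (Icc a b) f₁ f₂ a := by
  have hs := uniqueDiffOn_Icc hab
  have hcont₁ := hf₁.continuousOn_derivWithin hs (by norm_num)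
  have hcont₂ := hf₂.continuousOn_derivWithin hs (by norm_num)
  have hcont₁' := hf₁.continuousOn_iteratedDerivWithin le_rfl hs
  have hcont₂' := hf₂.continuousOn_iteratedDerivWithin le_rfl hs
  refine intervalIntegral.integral_eq_sub_of_hasDerivAt_of_le hab.le
    ((hcont₁.mul hf₂.continuousOn).sub (hf₁.continuousOn.mul hcont₂)) (fun x hx ↦ ?_)
    (ContinuousOn.intervalIntegrable ?_)
  · have hd₁ := (hf₁.differentiableOn two_ne_zero).hasDerivAt_derivWithin_Icc hx
    have hd₂ := (hf₂.differentiableOn two_ne_zero).hasDerivAt_derivWithin_Icc hx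
    exact ((hf₁.hasDerivAt_derivWithin_derivWithin_Icc hx).fun_mul hd₂).fun_sub
      (hd₁.fun_mul (hf₂.hasDerivAt_derivWithin_derivWithin_Icc hx)) |>.congr_deriv (by ring)
  · rw [uIcc_of_le hab.le]
    exact (hcont₁'.mul hf₂.continuousOn).sub (hf₁.continuousOn.mul hcont₂')

theorem derivWithin_sub_derivWithin_eq_integral {c₁ c₂ : ℝ} (hab : a < b)
    (hf₁ : ContDiffOn ℝ 2 f₁ (Icc a b)) (hf₂ : ContDiffOn ℝ 2 f₂ (Icc a b))
    (hode₁ : ∀ x ∈ Icc a b, iteratedDerivWithin 2 f₁ (Icc a b) x = (q x + c₁) * f₁ x)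
    (hode₂ : ∀ x ∈ Icc a b, iteratedDerivWithin 2 f₂ (Icc a b) x = (q x + c₂) * f₂ x)
    (h₁b : f₁ b = 0) (h₁a : f₁ a = 1) (h₂b : f₂ b = 0) (h₂a : f₂ a = 1) :
    derivWithin f₁ (Icc a b) a - derivWithin f₂ (Icc a b) a
      = (c₂ - c₁) * ∫ x in a..b, f₁ x * f₂ x := by
  have hintegrand : ∫ x in a..b, (iteratedDerivWithin 2 f₁ (Icc a b) x * f₂ x
        - f₁ x * iteratedDerivWithin 2 f₂ (Icc a b) x)
      = (c₁ - c₂) * ∫ x in a..b, f₁ x * f₂ x := by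
    rw [← intervalIntegral.integral_const_mul]
    refine intervalIntegral.integral_congr fun x hx ↦ ?_
    rw [uIcc_of_le hab.le] at hx
    simp only [hode₁ x hx, hode₂ x hx]
    ring
  have hwronskian := integral_eq_sub_wronskianWithin hab hf₁ hf₂
  simp only [wronskianWithin, hintegrand, h₁b, h₂b, h₁a, h₂a] at hwronskian
  linear_combination hwronskian

lemma monotoneOn_mul_derivWithin_of_iteratedDerivWithin_two_eq (hab : a < b)
    (hf : ContDiffOn ℝ 2 f (Icc a b))
    (hode : ∀ x ∈ Ioo a b, iteratedDerivWithin 2 f (Icc a b) x = q x * f x)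
    (hq : ∀ x ∈ Ioo a b, 0 ≤ q x) :
    MonotoneOn (fun x ↦ f x * derivWithin f (Icc a b) x) (Icc a b) := by
  refine monotoneOn_of_hasDerivWithinAt_nonneg (convex_Icc a b)
    (hf.continuousOn.mul (hf.continuousOn_derivWithin (uniqueDiffOn_Icc hab) (by norm_num)))
    (f' := fun x ↦ derivWithin f (Icc a b) x ^ 2 + q x * f x ^ 2) ?_ ?_ <;>
    rw [interior_Icc] <;> intro x hx
  · have hf' := (hf.differentiableOn two_ne_zero).hasDerivAt_derivWithin_Icc hx
    have hf'' := hf.hasDerivAt_derivWithin_derivWithin_Icc hx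
    rw [hode x hx] at hf''
    exact (hf'.fun_mul hf'').hasDerivWithinAt.congr_deriv (by ring)
  · have := hq x hx
    positivity

lemma antitoneOn_sq_of_iteratedDerivWithin_two_eq (hab : a < b)
    (hf : ContDiffOn ℝ 2 f (Icc a b))
    (hode : ∀ x ∈ Ioo a b, iteratedDerivWithin 2 f (Icc a b) x = q x * f x)
    (hq : ∀ x ∈ Ioo a b, 0 ≤ q x) (hb : f b = 0) :
    AntitoneOn (fun x ↦ f x ^ 2) (Icc a b) := by
  have hmono := monotoneOn_mul_derivWithin_of_iteratedDerivWithin_two_eq hab hf hode hq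
  refine antitoneOn_of_hasDerivWithinAt_nonpos (convex_Icc a b) (hf.continuousOn.pow 2)
    (f' := fun x ↦ 2 * (f x * derivWithin f (Icc a b) x)) ?_ ?_ <;>
    rw [interior_Icc] <;> intro x hx
  · exact (((hf.differentiableOn two_ne_zero).hasDerivAt_derivWithin_Icc hx).fun_pow 2
      ).hasDerivWithinAt.congr_deriv (by ring)
  · have := hmono (Ioo_subset_Icc_self hx) (right_mem_Icc.2 hab.le) hx.2.le
    simp only [hb, zero_mul] at this
    linarith

lemma pos_of_iteratedDerivWithin_two_eq
    (hf : ContDiffOn ℝ 2 f (Icc a b))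
    (hode : ∀ x ∈ Ioo a b, iteratedDerivWithin 2 f (Icc a b) x = q x * f x)
    (hq : ∀ x ∈ Ioo a b, 0 ≤ q x) (ha : 0 < f a) (hb : f b = 0)
    (hb' : derivWithin f (Icc a b) b < 0) : ∀ x ∈ Ico a b, 0 < f x := by
  intro x hx
  have hab : a < b := hx.1.trans_lt hx.2
  have hanti := antitoneOn_sq_of_iteratedDerivWithin_two_eq hab hf hode hq hb
  have hne : ∀ y ∈ Ico a b, f y ≠ 0 := by
    intro y hy hy0
    have hzero : f =ᶠ[𝓝[Icc a b] b] fun _ ↦ 0 := by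
      filter_upwards [self_mem_nhdsWithin, nhdsWithin_le_nhds (Ioi_mem_nhds hy.2)]
        with z hz hyz
      have := hanti ⟨hy.1, hy.2.le⟩ hz (le_of_lt hyz)
      simp only [hy0] at this
      nlinarith [sq_nonneg (f z)]
    rw [hzero.derivWithin_eq hb] at hb'
    simp at hb'
  by_contra! hfx
  obtain ⟨y, hy, hy0⟩ := intermediate_value_Icc' hx.1
    (hf.continuousOn.mono (Icc_subset_Icc_right hx.2.le)) ⟨hfx, ha.le⟩
  exact hne y ⟨hy.1, hy.2.trans_lt hx.2⟩ hy0
end Icc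

theorem statement12_general (ν p₁ p₂ : ℝ) (hν : 0 ≤ ν) (hν' : ν < 1 / 2) (hp₁ : 0 < p₁)
    (f₁ f₂ : ℝ → ℝ)
    (hf₁ : ContDiffOn ℝ 2 f₁ (Set.Icc (1 / 2) 1))
    (hf₂ : ContDiffOn ℝ 2 f₂ (Set.Icc (1 / 2) 1))
    (hode₁ : ∀ x ∈ Set.Icc (1 / 2 : ℝ) 1,
      iteratedDerivWithin 2 f₁ (Set.Icc (1 / 2) 1) x = (2 / (x ^ 2 - ν ^ 2) + p₁ ^ 2) * f₁ x)
    (hode₂ : ∀ x ∈ Set.Icc (1 / 2 : ℝ) 1,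
      iteratedDerivWithin 2 f₂ (Set.Icc (1 / 2) 1) x = (2 / (x ^ 2 - ν ^ 2) + p₂ ^ 2) * f₂ x)
    (h₁1 : f₁ 1 = 0) (h₁12 : f₁ (1 / 2) = 1)
    (h₂1 : f₂ 1 = 0) (h₂12 : f₂ (1 / 2) = 1) :
    derivWithin f₁ (Set.Icc (1 / 2) 1) (1 / 2) - derivWithin f₂ (Set.Icc (1 / 2) 1) (1 / 2)
      = (p₂ ^ 2 - p₁ ^ 2) * ∫ w in (1 / 2 : ℝ)..1, f₁ w * f₂ w ∧
    (derivWithin f₁ (Set.Icc (1 / 2) 1) 1 < 0 → derivWithin f₂ (Set.Icc (1 / 2) 1) 1 < 0 →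
      p₁ < p₂ →
      derivWithin f₂ (Set.Icc (1 / 2) 1) (1 / 2) < derivWithin f₁ (Set.Icc (1 / 2) 1) (1 / 2)) := by
  have hidentity := derivWithin_sub_derivWithin_eq_integral (q := fun x ↦ 2 / (x ^ 2 - ν ^ 2))
    (by norm_num) hf₁ hf₂ hode₁ hode₂ h₁1 h₁12 h₂1 h₂12
  refine ⟨hidentity, fun hd₁ hd₂ hp ↦ ?_⟩
  have hq : ∀ p : ℝ, ∀ x ∈ Ioo (1 / 2 : ℝ) 1, 0 ≤ 2 / (x ^ 2 - ν ^ 2) + p ^ 2 := by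
    intro p x hx
    have : 0 < x ^ 2 - ν ^ 2 := by nlinarith [hx.1]
    positivity
  have hpos₁ := pos_of_iteratedDerivWithin_two_eq hf₁ (fun x hx ↦ hode₁ x (Ioo_subset_Icc_self hx))
    (hq p₁) (by norm_num [h₁12]) h₁1 hd₁
  have hpos₂ := pos_of_iteratedDerivWithin_two_eq hf₂ (fun x hx ↦ hode₂ x (Ioo_subset_Icc_self hx))
    (hq p₂) (by norm_num [h₂12]) h₂1 hd₂
  have hI : 0 < ∫ w in (1 / 2 : ℝ)..1, f₁ w * f₂ w :=
    intervalIntegral.intervalIntegral_pos_of_pos_on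
      ((hf₁.continuousOn.mul hf₂.continuousOn).intervalIntegrable_of_Icc (by norm_num))
      (fun x hx ↦ mul_pos (hpos₁ x (Ioo_subset_Ico_self hx)) (hpos₂ x (Ioo_subset_Ico_self hx)))
      (by norm_num)
  have hp2 : 0 < p₂ ^ 2 - p₁ ^ 2 := by nlinarith
  exact sub_pos.1 (hidentity ▸ mul_pos hp2 hI)

/-- Wronskian identity on the right interval: for `0 ≤ ν < 1/2`, `p₁, p₂ > 0` and solutions
`fᵢ` of `fᵢ'' = (2/(x²−ν²) + pᵢ²) fᵢ` on `[1/2,1]` with `fᵢ(1)=0`, `fᵢ(1/2)=1`, one has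
`f₁'(1/2) − f₂'(1/2) = (p₂² − p₁²) ∫_{1/2}^1 f₁ f₂`; in particular if moreover
`f₁'(1) < 0`, `f₂'(1) < 0` and `p₁ < p₂`, then `f₁'(1/2) > f₂'(1/2)`. -/
theorem statement12 (ν p₁ p₂ : ℝ) (hν : 0 ≤ ν) (hν' : ν < 1 / 2) (hp₁ : 0 < p₁) (hp₂ : 0 < p₂)
    (f₁ f₂ : ℝ → ℝ)
    (hf₁ : ContDiffOn ℝ 2 f₁ (Set.Icc (1 / 2) 1))
    (hf₂ : ContDiffOn ℝ 2 f₂ (Set.Icc (1 / 2) 1))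
    (hode₁ : ∀ x ∈ Set.Icc (1 / 2 : ℝ) 1,
      iteratedDerivWithin 2 f₁ (Set.Icc (1 / 2) 1) x = (2 / (x ^ 2 - ν ^ 2) + p₁ ^ 2) * f₁ x)
    (hode₂ : ∀ x ∈ Set.Icc (1 / 2 : ℝ) 1,
      iteratedDerivWithin 2 f₂ (Set.Icc (1 / 2) 1) x = (2 / (x ^ 2 - ν ^ 2) + p₂ ^ 2) * f₂ x)
    (h₁1 : f₁ 1 = 0) (h₁12 : f₁ (1 / 2) = 1)
    (h₂1 : f₂ 1 = 0) (h₂12 : f₂ (1 / 2) = 1) :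
    derivWithin f₁ (Set.Icc (1 / 2) 1) (1 / 2) - derivWithin f₂ (Set.Icc (1 / 2) 1) (1 / 2)
      = (p₂ ^ 2 - p₁ ^ 2) * ∫ w in (1 / 2 : ℝ)..1, f₁ w * f₂ w ∧
    (derivWithin f₁ (Set.Icc (1 / 2) 1) 1 < 0 → derivWithin f₂ (Set.Icc (1 / 2) 1) 1 < 0 →
      p₁ < p₂ →
      derivWithin f₂ (Set.Icc (1 / 2) 1) (1 / 2) < derivWithin f₁ (Set.Icc (1 / 2) 1) (1 / 2)) :=
  statement12_general ν p₁ p₂ hν hν' hp₁ f₁ f₂ hf₁ hf₂ hode₁ hode₂ h₁1 h₁12 h₂1 h₂12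
end

section
/- Let 0 ≤ ν < 1/2 and p > 0, and let f ∈ C²([1/2,1]) satisfy f''(x) = ( 2/(x²−ν²) + p² ) f(x) for all x ∈ [1/2,1], with f(1) = 0 and f(1/2) = 1. Then ∫_{1/2}^1 sinh(p(1−w)) f(w) / (w² − ν²) dw = −(1/2) sinh(p/2) f'(1/2) − (p/2) cosh(p/2). -/
/-!
By the ODE, `f / (w² - ν²) = (f'' - p² f) / 2`, so the integral is half of
`∫ k (f'' - p² f)` with `k w = sinh (p (1 - w))`. Since `k'' = p² k`, integrating by parts
twice leaves only boundary terms, which `k 1 = 0`, `k' 1 = -p`, `f 1 = 0` and `f (1/2) = 1`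
evaluate.
-/

open Real Set

theorem hasDerivAt_sinh_mul_derivWithin_add_cosh_mul {f : ℝ → ℝ} {a b x : ℝ} (p : ℝ)
    (hf : ContDiffOn ℝ 2 f (Icc a b)) (hx : x ∈ Ioo a b) :
    HasDerivAt
      (fun w => sinh (p * (b - w)) * derivWithin f (Icc a b) w + p * cosh (p * (b - w)) * f w)
      (sinh (p * (b - x)) * (iteratedDerivWithin 2 f (Icc a b) x - p ^ 2 * f x)) x := by
  set s := Icc a b
  have hxs : x ∈ s := Ioo_subset_Icc_self hx
  have hnhds : s ∈ nhds x := Icc_mem_nhds hx.1 hx.2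
  have hf' : ContDiffOn ℝ 1 (derivWithin f s) s :=
    hf.derivWithin (uniqueDiffOn_Icc (hx.1.trans hx.2)) (by norm_num)
  have hkx : HasDerivAt (fun w => p * (b - w)) (-p) x := by
    simpa using ((hasDerivAt_id x).const_sub b).const_mul p
  have hfx : HasDerivAt f (derivWithin f s x) x :=
    ((hf.differentiableOn (by norm_num) x hxs).hasDerivWithinAt).hasDerivAt hnhds
  have hf'x : HasDerivAt (derivWithin f s) (iteratedDerivWithin 2 f s x) x := by
    rw [iteratedDerivWithin_succ', iteratedDerivWithin_one]
    exact ((hf'.differentiableOn (by norm_num) x hxs).hasDerivWithinAt).hasDerivAt hnhds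
  refine ((((hasDerivAt_sinh _).comp x hkx).mul hf'x).add
    ((((hasDerivAt_cosh _).comp x hkx).const_mul p).mul hfx)).congr_deriv ?_
  simp only [Function.comp_apply]
  ring

theorem integral_sinh_mul_iteratedDerivWithin_sub {f : ℝ → ℝ} {a b : ℝ} (p : ℝ)
    (hab : a < b) (hf : ContDiffOn ℝ 2 f (Icc a b)) :
    ∫ w in a..b, sinh (p * (b - w)) * (iteratedDerivWithin 2 f (Icc a b) w - p ^ 2 * f w)
      = p * f b - sinh (p * (b - a)) * derivWithin f (Icc a b) a
        - p * cosh (p * (b - a)) * f a := by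
  have hs : UniqueDiffOn ℝ (Icc a b) := uniqueDiffOn_Icc hab
  have hk : Continuous fun w => p * (b - w) := by fun_prop
  have hF : ContinuousOn
      (fun w => sinh (p * (b - w)) * derivWithin f (Icc a b) w + p * cosh (p * (b - w)) * f w)
      (Icc a b) :=
    ((continuous_sinh.comp hk).continuousOn.mul
      (hf.continuousOn_derivWithin hs (by norm_num))).add
      ((continuous_const.mul (continuous_cosh.comp hk)).continuousOn.mul hf.continuousOn)
  have hint : IntervalIntegrable
      (fun w => sinh (p * (b - w)) * (iteratedDerivWithin 2 f (Icc a b) w - p ^ 2 * f w))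
      MeasureTheory.volume a b := by
    apply ContinuousOn.intervalIntegrable
    rw [uIcc_of_le hab.le]
    exact (continuous_sinh.comp hk).continuousOn.mul
      ((hf.continuousOn_iteratedDerivWithin le_rfl hs).sub
        (continuousOn_const.mul hf.continuousOn))
  rw [intervalIntegral.integral_eq_sub_of_hasDerivAt_of_le hab.le hF
    (fun x hx => hasDerivAt_sinh_mul_derivWithin_add_cosh_mul p hf hx) hint]
  simp only [sub_self, mul_zero, sinh_zero, cosh_zero]
  ring

theorem statement14_general (ν p : ℝ) (f : ℝ → ℝ)
    (hf : ContDiffOn ℝ 2 f (Set.Icc (1 / 2) 1))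
    (hode : ∀ x ∈ Set.Icc (1 / 2 : ℝ) 1,
      iteratedDerivWithin 2 f (Set.Icc (1 / 2) 1) x = (2 / (x ^ 2 - ν ^ 2) + p ^ 2) * f x)
    (h1 : f 1 = 0) (h12 : f (1 / 2) = 1) :
    ∫ w in (1 / 2 : ℝ)..1, Real.sinh (p * (1 - w)) * f w / (w ^ 2 - ν ^ 2)
      = -((1 / 2) * Real.sinh (p / 2) * derivWithin f (Set.Icc (1 / 2) 1) (1 / 2))
        - (p / 2) * Real.cosh (p / 2) := by
  have hab : (1 / 2 : ℝ) < 1 := by norm_num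
  have hintegrand : EqOn (fun w => sinh (p * (1 - w)) * f w / (w ^ 2 - ν ^ 2))
      (fun w => 1 / 2 * (sinh (p * (1 - w)) *
        (iteratedDerivWithin 2 f (Icc (1 / 2) 1) w - p ^ 2 * f w))) (uIcc (1 / 2) 1) := by
    intro w hw
    rw [uIcc_of_le hab.le] at hw
    simp only [hode w hw]
    ring
  rw [intervalIntegral.integral_congr hintegrand, intervalIntegral.integral_const_mul,
    integral_sinh_mul_iteratedDerivWithin_sub p hab hf, h1, h12,
    show p * (1 - 1 / 2) = p / 2 by ring]
  ring

/-- Integration-by-parts identity on the right interval: for `0 ≤ ν < 1/2`, `p > 0` and `f`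
solving `f'' = (2/(x²−ν²) + p²) f` on `[1/2,1]` with `f(1)=0`, `f(1/2)=1`, one has
`∫_{1/2}^1 sinh(p(1−w)) f(w)/(w²−ν²) dw = −(1/2) sinh(p/2) f'(1/2) − (p/2) cosh(p/2)`. -/
theorem statement14 (ν p : ℝ) (hν : 0 ≤ ν) (hν' : ν < 1 / 2) (hp : 0 < p) (f : ℝ → ℝ)
    (hf : ContDiffOn ℝ 2 f (Set.Icc (1 / 2) 1))
    (hode : ∀ x ∈ Set.Icc (1 / 2 : ℝ) 1,
      iteratedDerivWithin 2 f (Set.Icc (1 / 2) 1) x = (2 / (x ^ 2 - ν ^ 2) + p ^ 2) * f x)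
    (h1 : f 1 = 0) (h12 : f (1 / 2) = 1) :
    ∫ w in (1 / 2 : ℝ)..1, Real.sinh (p * (1 - w)) * f w / (w ^ 2 - ν ^ 2)
      = -((1 / 2) * Real.sinh (p / 2) * derivWithin f (Set.Icc (1 / 2) 1) (1 / 2))
        - (p / 2) * Real.cosh (p / 2) :=
  statement14_general ν p f hf hode h1 h12
end
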